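/- arXiv:2107.02465 — 3 statements merged into one kernel-verified Lean document; each statement's English description precedes it below -/
import Mathlib

section
/- Let 𝒫 be a nonempty set of Borel probability measures on ℝ^ℕ with sublinear expectation Ê[ξ] := sup_{P∈𝒫} E_P[ξ], and let (X_i) be the coordinate random variables, assumed independent and identically distributed under Ê, with μ̄ := sup_{P∈𝒫} E_P[X_1], μ̲ := inf_{P∈𝒫} E_P[X_1], and Ê[|X_1|²] < ∞. Then sup over all 1-Lipschitz functions φ : ℝ → ℝ of |Ê[φ(S_n/n)] − max_{r∈[μ̲,μ̄]} φ(r)| is at most σ̄(X_1)/√n, where σ̄²(X_1) := inf_{μ∈[μ̲,μ̄]} Ê[|X_1 − μ|²] is the upper variance. -/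
open MeasureTheory

/-- Sublinear expectation associated with a set of probability measures on the
sequence space `ℕ → ℝ`: `Ê[ξ] = sup_{P ∈ Pset} E_P[ξ]`. -/
noncomputable def SE (Pset : Set (Measure (ℕ → ℝ))) (ξ : (ℕ → ℝ) → ℝ) : ℝ :=
  ⨆ P : Pset, ∫ ω, ξ ω ∂(P : Measure (ℕ → ℝ))

/-- Bounded Lipschitz real-valued functions. -/
def BLip {E : Type*} [PseudoMetricSpace E] (φ : E → ℝ) : Prop :=
  (∃ K : NNReal, LipschitzWith K φ) ∧ ∃ M : ℝ, ∀ x, |φ x| ≤ M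

/-- The coordinate sequence is independent under the sublinear expectation `SE Pset`. -/
def IndepCoords (Pset : Set (Measure (ℕ → ℝ))) : Prop :=
  ∀ n : ℕ, 1 ≤ n → ∀ φ : (Fin (n + 1) → ℝ) → ℝ, BLip φ →
    SE Pset (fun ω => φ (fun i => ω (i : ℕ))) =
      SE Pset (fun ω => SE Pset (fun ω' =>
        φ (Fin.snoc (fun i : Fin n => ω (i : ℕ)) (ω' n))))

/-- The coordinate sequence is identically distributed under `SE Pset`. -/
def IdentDistCoords (Pset : Set (Measure (ℕ → ℝ))) : Prop :=
  ∀ i : ℕ, ∀ ψ : ℝ → ℝ, BLip ψ →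
    SE Pset (fun ω => ψ (ω i)) = SE Pset (fun ω => ψ (ω 0))

/-!
Independence turns `Ê[ψ(S_n)]`, for bounded Lipschitz `ψ`, into the `n`-th iterate at `0` of the
one-step operator `Tψ(x) = Ê[ψ(x + X₁)]` (`stepOp`). Take `ψ(s) = φ(s / n)`, write `I = [μ̲, μ̄]`
and `d` for the distance to a set, and propagate two estimates through `T`.

Upper bound: under every `P ∈ 𝒫` the mean of `X₁` lies in `I` and its variance is at most `σ̄²`,
so `E_P d(x + X₁, J + I)² ≤ d(x, J)² + σ̄²`; with Jensen's inequality for `√` this propagates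
`Tᵏψ(x) ≤ max_I φ + √(d(x, (n - k) I)² + k σ̄²) / n` down to `k = n`, `x = 0`.

Lower bound: for every `z` some `P ∈ 𝒫` satisfies `E_P d(z - X₁, J)² ≤ d(z, J + I)² + σ̄² + δ`
(any `P` if a near-minimiser `μ` of `σ̄²` has `z - μ ∈ J`, otherwise one whose mean is almost
extremal on the side of `z - J`), which propagates
`Tᵏψ(x) ≥ ψ(x + z) - √(d(z, k I)² + k (σ̄² + δ)) / n`; take `x = 0`, `z = n r` with `r ∈ I`.

Unbounded `φ` are truncated at height `R`. Identical distribution and monotone convergence bound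
the second moments of all `X_i` by `C = sup_P E_P X₁²`, so truncation costs at most `2C/R`.
-/

open MeasureTheory ProbabilityTheory Set Filter Topology Metric

variable {Pset : Set (Measure (ℕ → ℝ))}

/-! ## Sublinear expectation -/

lemma SE_le (hne : Pset.Nonempty) {f : (ℕ → ℝ) → ℝ} {c : ℝ}
    (h : ∀ P ∈ Pset, ∫ ω, f ω ∂P ≤ c) : SE Pset f ≤ c :=
  haveI := hne.to_subtype
  ciSup_le fun P => h P P.2

lemma integral_le_SE {f : (ℕ → ℝ) → ℝ} {c : ℝ} {P : Measure (ℕ → ℝ)} (hP : P ∈ Pset)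
    (h : ∀ Q ∈ Pset, ∫ ω, f ω ∂Q ≤ c) : ∫ ω, f ω ∂P ≤ SE Pset f :=
  le_ciSup (f := fun Q : Pset => ∫ ω, f ω ∂(Q : Measure (ℕ → ℝ)))
    ⟨c, by rintro _ ⟨Q, rfl⟩; exact h Q Q.2⟩ ⟨P, hP⟩

lemma SE_const (hne : Pset.Nonempty) (hprob : ∀ P ∈ Pset, IsProbabilityMeasure P) (c : ℝ) :
    SE Pset (fun _ => c) = c := by
  have := hne.to_subtype
  have h : ∀ P : Pset, ∫ _ω, c ∂(P : Measure (ℕ → ℝ)) = c := fun P => by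
    have := hprob P P.2
    simp
  simp only [SE, h, ciSup_const]

lemma abs_SE_sub_SE_le (hne : Pset.Nonempty) {f g : (ℕ → ℝ) → ℝ} {c e : ℝ}
    (hg : ∀ P ∈ Pset, ∫ ω, g ω ∂P ≤ c) (h : ∀ P ∈ Pset, |∫ ω, f ω ∂P - ∫ ω, g ω ∂P| ≤ e) :
    |SE Pset f - SE Pset g| ≤ e := by
  have hf : ∀ P ∈ Pset, ∫ ω, f ω ∂P ≤ c + e := fun P hP => by
    linarith [(abs_le.1 (h P hP)).2, hg P hP]
  rw [abs_sub_le_iff]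
  constructor
  · refine sub_le_iff_le_add'.2 (SE_le hne fun P hP => ?_)
    linarith [(abs_le.1 (h P hP)).2, integral_le_SE hP hg]
  · refine sub_le_iff_le_add'.2 (SE_le hne fun P hP => ?_)
    linarith [(abs_le.1 (h P hP)).1, integral_le_SE hP hf]

section BLip

variable {Ω : Type*} [MeasurableSpace Ω] {ψ : ℝ → ℝ} {u : Ω → ℝ}

lemma BLip.integrable {P : Measure Ω} [IsFiniteMeasure P] (hψ : BLip ψ) (hu : Measurable u) :
    Integrable (fun ω => ψ (u ω)) P := by
  obtain ⟨⟨K, hK⟩, M, hM⟩ := hψ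
  exact .of_bound (hK.continuous.measurable.comp hu).aestronglyMeasurable M
    (ae_of_all _ fun ω => (Real.norm_eq_abs _).trans_le (hM _))

lemma BLip.exists_forall_abs_integral_le (hψ : BLip ψ) :
    ∃ M, ∀ (u : Ω → ℝ) (P : Measure Ω) [IsProbabilityMeasure P], |∫ ω, ψ (u ω) ∂P| ≤ M := by
  obtain ⟨-, M, hM⟩ := hψ
  exact ⟨M, fun u P _ => by
    simpa using norm_integral_le_of_norm_le_const (μ := P)
      (ae_of_all _ fun ω => (Real.norm_eq_abs _).trans_le (hM (u ω)))⟩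

end BLip

lemma BLip.integral_comp_le_SE (hprob : ∀ P ∈ Pset, IsProbabilityMeasure P) {ψ : ℝ → ℝ}
    (hψ : BLip ψ) (u : (ℕ → ℝ) → ℝ) {P : Measure (ℕ → ℝ)} (hP : P ∈ Pset) :
    ∫ ω, ψ (u ω) ∂P ≤ SE Pset fun ω => ψ (u ω) := by
  obtain ⟨M, hM⟩ := hψ.exists_forall_abs_integral_le (Ω := ℕ → ℝ)
  exact integral_le_SE hP fun Q hQ => by
    have := hprob Q hQ
    exact (le_abs_self _).trans (hM u Q)

lemma BLip.comp_const_add {ψ : ℝ → ℝ} (hψ : BLip ψ) (c : ℝ) : BLip fun t => ψ (c + t) := by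
  obtain ⟨⟨K, hK⟩, M, hM⟩ := hψ
  refine ⟨⟨K, LipschitzWith.of_dist_le_mul fun s t => ?_⟩, M, fun t => hM _⟩
  simpa using hK.dist_le_mul (c + s) (c + t)

lemma BLip.comp_sum {ψ : ℝ → ℝ} (hψ : BLip ψ) (n : ℕ) : BLip fun v : Fin n → ℝ => ψ (∑ i, v i) := by
  obtain ⟨⟨K, hK⟩, M, hM⟩ := hψ
  have hsum : LipschitzWith n fun v : Fin n → ℝ => ∑ i, v i :=
    LipschitzWith.of_dist_le_mul fun v w =>
      (dist_sum_sum_le_of_le _ fun i _ => dist_le_pi_dist v w i).trans (by simp)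
  exact ⟨⟨K * n, hK.comp hsum⟩, M, fun v => hM _⟩

/-! ## The one-step operator -/

noncomputable def stepOp (Pset : Set (Measure (ℕ → ℝ))) (ψ : ℝ → ℝ) (x : ℝ) : ℝ :=
  SE Pset fun ω => ψ (x + ω 0)

lemma bLip_stepOp (hne : Pset.Nonempty) (hprob : ∀ P ∈ Pset, IsProbabilityMeasure P)
    {ψ : ℝ → ℝ} (hψ : BLip ψ) : BLip (stepOp Pset ψ) := by
  obtain ⟨⟨K, hK⟩, -⟩ := id hψ
  obtain ⟨M', hM'⟩ := hψ.exists_forall_abs_integral_le (Ω := ℕ → ℝ)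
  refine ⟨⟨K, LipschitzWith.of_le_add_mul K fun x y => SE_le hne fun P hP => ?_⟩, M', fun x => ?_⟩
  · have := hprob P hP
    calc ∫ ω, ψ (x + ω 0) ∂P ≤ ∫ ω, (ψ (y + ω 0) + K * dist x y) ∂P := by
          refine integral_mono (hψ.integrable (by fun_prop))
            ((hψ.integrable (by fun_prop)).add (integrable_const _))
            fun ω => ?_
          have h := hK.dist_le_mul (x + ω 0) (y + ω 0)
          rw [dist_add_right, Real.dist_eq] at h
          linarith [le_abs_self (ψ (x + ω 0) - ψ (y + ω 0))]
      _ ≤ stepOp Pset ψ y + K * dist x y := by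
          rw [integral_add (hψ.integrable (by fun_prop)) (integrable_const _),
            integral_const, probReal_univ, one_smul]
          gcongr
          exact hψ.integral_comp_le_SE hprob _ hP
  · obtain ⟨P, hP⟩ := hne
    have := hprob P hP
    refine abs_le.2 ⟨?_, SE_le ⟨P, hP⟩ fun Q hQ => ?_⟩
    · exact (neg_le_of_abs_le (hM' _ P)).trans (hψ.integral_comp_le_SE hprob _ hP)
    · have := hprob Q hQ
      exact (le_abs_self _).trans (hM' _ Q)

lemma SE_sum_range_succ (hne : Pset.Nonempty) (hprob : ∀ P ∈ Pset, IsProbabilityMeasure P)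
    (hindep : IndepCoords Pset) (hid : IdentDistCoords Pset) {ψ : ℝ → ℝ} (hψ : BLip ψ) (k : ℕ) :
    SE Pset (fun ω => ψ (∑ i ∈ Finset.range (k + 1), ω i)) =
      SE Pset (fun ω => stepOp Pset ψ (∑ i ∈ Finset.range k, ω i)) := by
  rcases Nat.eq_zero_or_pos k with rfl | hk
  · simp [SE_const hne hprob, stepOp]
  have hsnoc : ∀ ω ω' : ℕ → ℝ,
      ∑ i, Fin.snoc (α := fun _ => ℝ) (fun i : Fin k => ω i) (ω' k) i
        = (∑ i ∈ Finset.range k, ω i) + ω' k := by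
    intro ω ω'
    simp [Fin.sum_univ_castSucc, Fin.sum_univ_eq_sum_range]
  have hrange : ∀ ω : ℕ → ℝ, ∑ i : Fin (k + 1), ω i = ∑ i ∈ Finset.range (k + 1), ω i :=
    fun ω => Fin.sum_univ_eq_sum_range ω _
  have h := hindep k hk _ (hψ.comp_sum (k + 1))
  simp only [hsnoc, hrange] at h
  rw [h]
  congr 1
  funext ω
  exact hid k _ (hψ.comp_const_add _)

lemma SE_sum_range_eq_iterate (hne : Pset.Nonempty) (hprob : ∀ P ∈ Pset, IsProbabilityMeasure P)
    (hindep : IndepCoords Pset) (hid : IdentDistCoords Pset) (k : ℕ) {ψ : ℝ → ℝ}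
    (hψ : BLip ψ) :
    SE Pset (fun ω => ψ (∑ i ∈ Finset.range k, ω i)) = (stepOp Pset)^[k] ψ 0 := by
  induction k generalizing ψ with
  | zero => simp [SE_const hne hprob]
  | succ k ih =>
    rw [SE_sum_range_succ hne hprob hindep hid hψ, ih (bLip_stepOp hne hprob hψ),
      Function.iterate_succ_apply]

lemma bLip_iterate_stepOp (hne : Pset.Nonempty) (hprob : ∀ P ∈ Pset, IsProbabilityMeasure P)
    {ψ : ℝ → ℝ} (hψ : BLip ψ) (k : ℕ) : BLip ((stepOp Pset)^[k] ψ) := by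
  induction k with
  | zero => exact hψ
  | succ k ih => rw [Function.iterate_succ_apply']; exact bLip_stepOp hne hprob ih

/-! ## Distance to an interval -/

lemma max_sub_le_infDist_Icc {lo hi : ℝ} (h : lo ≤ hi) (z : ℝ) :
    max (lo - z) (z - hi) ≤ infDist z (Icc lo hi) :=
  (le_infDist (nonempty_Icc.2 h)).2 fun y hy => by
    rw [Real.dist_eq]
    exact max_le (by linarith [neg_abs_le (z - y), hy.1]) (by linarith [le_abs_self (z - y), hy.2])

lemma exists_pos_add_sq_le {D δ : ℝ} (hD : 0 ≤ D) (hδ : 0 < δ) :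
    ∃ ε > 0, (D + ε) ^ 2 ≤ D ^ 2 + δ := by
  refine ⟨min 1 (δ / (2 * D + 1)), by positivity, ?_⟩
  have h1 : min 1 (δ / (2 * D + 1)) ≤ 1 := min_le_left _ _
  have h2 : min 1 (δ / (2 * D + 1)) * (2 * D + 1) ≤ δ :=
    (le_div_iff₀ (by positivity)).1 (min_le_right _ _)
  nlinarith [(by positivity : 0 < min 1 (δ / (2 * D + 1)))]

lemma sq_sub_le_or_sq_sub_le {m c μ t D ε : ℝ} (hμc : μ ≤ c) (hm : t - ε < m)
    (hD : c - t ≤ D) : (m - c) ^ 2 ≤ (m - μ) ^ 2 ∨ (m - c) ^ 2 ≤ (D + ε) ^ 2 := by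
  rcases le_total c m with hcm | hmc
  · exact Or.inl (pow_le_pow_left₀ (by linarith) (by linarith) 2)
  · right
    rw [← neg_sub, neg_sq]
    exact pow_le_pow_left₀ (by linarith) (by linarith) 2

section Probability

variable {Ω : Type*} [MeasurableSpace Ω] {P : Measure Ω} {X : Ω → ℝ}

lemma MeasureTheory.Integrable.sqrt [IsFiniteMeasure P] {g : Ω → ℝ} (hg : Integrable g P)
    (h0 : ∀ ω, 0 ≤ g ω) : Integrable (fun ω => √(g ω)) P := by
  refine (hg.add (integrable_const 1)).mono' (Real.continuous_sqrt.comp_aestronglyMeasurable hg.1)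
    (ae_of_all _ fun ω => ?_)
  rw [Real.norm_eq_abs, abs_of_nonneg (Real.sqrt_nonneg _), Pi.add_apply]
  nlinarith [Real.sq_sqrt (h0 ω), sq_nonneg (√(g ω) - 1)]

lemma integral_sqrt_le_sqrt_integral [IsProbabilityMeasure P] {g : Ω → ℝ} (hg : Integrable g P)
    (h0 : ∀ ω, 0 ≤ g ω) : ∫ ω, √(g ω) ∂P ≤ √(∫ ω, g ω ∂P) :=
  Real.strictConcaveOn_sqrt.concaveOn.le_map_integral Real.continuous_sqrt.continuousOn
    isClosed_Ici (ae_of_all _ h0) hg (hg.sqrt h0)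

lemma MeasureTheory.MemLp.integrable_infDist_sq [IsFiniteMeasure P] {Y : Ω → ℝ}
    (hY : MemLp Y 2 P) (J : Set ℝ) : Integrable (fun ω => infDist (Y ω) J ^ 2) P := by
  refine MemLp.integrable_sq <| (hY.norm.add (memLp_const (infDist 0 J))).of_le
    ((continuous_infDist_pt J).comp_aestronglyMeasurable hY.1) (ae_of_all _ fun ω => ?_)
  have h := infDist_le_infDist_add_dist (x := Y ω) (y := 0) (s := J)
  simp only [Real.norm_eq_abs, dist_zero_right, Pi.add_apply] at h ⊢
  rw [abs_of_nonneg infDist_nonneg, abs_of_nonneg (add_nonneg (abs_nonneg _) infDist_nonneg)]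
  linarith

lemma integral_sub_sq_eq [IsProbabilityMeasure P] {Y : Ω → ℝ} (hY : MemLp Y 2 P) (p : ℝ) :
    ∫ ω, (Y ω - p) ^ 2 ∂P = (P[Y] - p) ^ 2 + Var[Y; P] := by
  have hYp : MemLp (fun ω => Y ω - p) 2 P := hY.sub (memLp_const p)
  rw [← variance_sub_const hY.1 p, variance_eq_sub hYp,
    integral_sub (hY.integrable one_le_two) (integrable_const p)]
  simp [Pi.pow_apply]

lemma abs_integral_le_sqrt_integral_sq [IsProbabilityMeasure P] {Y : Ω → ℝ} (hY : MemLp Y 2 P) :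
    |P[Y]| ≤ √(∫ ω, Y ω ^ 2 ∂P) := by
  have h := integral_sub_sq_eq hY 0
  simp only [sub_zero] at h
  exact Real.abs_le_sqrt (by linarith [variance_nonneg Y P])

lemma integral_infDist_sq_le [IsProbabilityMeasure P] {Y : Ω → ℝ} (hY : MemLp Y 2 P)
    {J : Set ℝ} {p : ℝ} (hp : p ∈ J) :
    ∫ ω, infDist (Y ω) J ^ 2 ∂P ≤ (P[Y] - p) ^ 2 + Var[Y; P] := by
  rw [← integral_sub_sq_eq hY p]
  refine integral_mono (hY.integrable_infDist_sq J) (hY.sub (memLp_const p)).integrable_sq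
    fun ω => ?_
  rw [← sq_abs (Y ω - p), ← Real.dist_eq]
  exact pow_le_pow_left₀ infDist_nonneg (infDist_le_dist_of_mem hp) 2

lemma integral_infDist_const_add_sq_le [IsProbabilityMeasure P] (hX : MemLp X 2 P)
    {μl μb : ℝ} (hmean : P[X] ∈ Icc μl μb) {a b : ℝ} (hab : a ≤ b) (x : ℝ) :
    ∫ ω, infDist (x + X ω) (Icc (a + μl) (b + μb)) ^ 2 ∂P ≤
      infDist x (Icc a b) ^ 2 + Var[X; P] := by
  obtain ⟨q, hq, hxq⟩ := isCompact_Icc.exists_infDist_eq_dist (nonempty_Icc.2 hab) x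
  have hp : q + P[X] ∈ Icc (a + μl) (b + μb) :=
    ⟨add_le_add hq.1 hmean.1, add_le_add hq.2 hmean.2⟩
  have h := integral_infDist_sq_le (Y := fun ω => x + X ω) ((memLp_const x).add hX) hp
  rw [hxq, Real.dist_eq, sq_abs]
  rwa [variance_const_add hX.1, integral_add (integrable_const x) (hX.integrable one_le_two),
    integral_const, probReal_univ, one_smul, add_sub_add_right_eq_sub] at h

lemma exists_integral_infDist_sub_sq_le {Pset : Set (Measure Ω)} (hne : Pset.Nonempty)
    (hprob : ∀ P ∈ Pset, IsProbabilityMeasure P) (hX : ∀ P ∈ Pset, MemLp X 2 P)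
    {μl μb s2 : ℝ} (hvar : ∀ P ∈ Pset, Var[X; P] ≤ s2)
    (hmb : ∀ ε > 0, ∃ P ∈ Pset, μb - ε < P[X]) (hml : ∀ ε > 0, ∃ P ∈ Pset, P[X] < μl + ε)
    {μ δ : ℝ} (hμ : μ ∈ Icc μl μb) (hμP : ∀ P ∈ Pset, (P[X] - μ) ^ 2 + Var[X; P] ≤ s2 + δ)
    (hδ : 0 < δ) {a b : ℝ} (hab : a ≤ b) (z : ℝ) :
    ∃ P ∈ Pset, ∫ ω, infDist (z - X ω) (Icc a b) ^ 2 ∂P ≤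
      infDist z (Icc (a + μl) (b + μb)) ^ 2 + (s2 + δ) := by
  set D := infDist z (Icc (a + μl) (b + μb))
  have hD : max (a + μl - z) (z - (b + μb)) ≤ D :=
    max_sub_le_infDist_Icc (by linarith [hμ.1, hμ.2]) z
  obtain ⟨ε, hε, hDε⟩ := exists_pos_add_sq_le (D := D) infDist_nonneg hδ
  have key : ∀ P ∈ Pset, ∀ p ∈ Icc a b,
      ∫ ω, infDist (z - X ω) (Icc a b) ^ 2 ∂P ≤ (P[X] - (z - p)) ^ 2 + Var[X; P] := by
    intro P hP p hp
    have := hprob P hP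
    have h := integral_infDist_sq_le (Y := fun ω => z - X ω) ((memLp_const z).sub (hX P hP)) hp
    rw [variance_const_sub (hX P hP).1, integral_sub (integrable_const z)
      ((hX P hP).integrable one_le_two), integral_const, probReal_univ, one_smul] at h
    convert h using 2
    ring
  rcases lt_or_ge μ (z - b) with hμb | hμb
  · obtain ⟨P, hP, hm⟩ := hmb ε hε
    refine ⟨P, hP, (key P hP b ⟨hab, le_rfl⟩).trans ?_⟩
    rcases sq_sub_le_or_sq_sub_le (D := D) hμb.le hm
      (by linarith [le_max_right (a + μl - z) (z - (b + μb))]) with h | h <;>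
      linarith [hμP P hP, hvar P hP, sq_nonneg D]
  rcases lt_or_ge (z - a) μ with hμa | hμa
  · obtain ⟨P, hP, hm⟩ := hml ε hε
    refine ⟨P, hP, (key P hP a ⟨le_rfl, hab⟩).trans ?_⟩
    have h := sq_sub_le_or_sq_sub_le (m := -P[X]) (c := -(z - a)) (μ := -μ) (t := -μl) (D := D)
      (ε := ε) (by linarith) (by linarith)
      (by linarith [le_max_left (a + μl - z) (z - (b + μb))])
    have hsymm : ∀ u v : ℝ, (-u - -v) ^ 2 = (u - v) ^ 2 := fun u v => by ring
    rw [hsymm, hsymm] at h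
    rcases h with h | h <;> linarith [hμP P hP, hvar P hP, sq_nonneg D]
  · obtain ⟨P, hP⟩ := hne
    refine ⟨P, hP, (key P hP (z - μ) ⟨by linarith, by linarith⟩).trans ?_⟩
    rw [sub_sub_cancel]
    linarith [hμP P hP, sq_nonneg D]

end Probability

/-! ## Propagation through the one-step operator -/

lemma stepOp_le_of_le_sqrt (hne : Pset.Nonempty) (hprob : ∀ P ∈ Pset, IsProbabilityMeasure P)
    {ψ : ℝ → ℝ} (hψ : BLip ψ) {G : (ℕ → ℝ) → ℝ} {M c B x : ℝ} (hc : 0 ≤ c)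
    (hG0 : ∀ ω, 0 ≤ G ω) (hle : ∀ ω, ψ (x + ω 0) ≤ M + c * √(G ω))
    (hG : ∀ P ∈ Pset, Integrable G P ∧ ∫ ω, G ω ∂P ≤ B) : stepOp Pset ψ x ≤ M + c * √B :=
  SE_le hne fun P hP => by
    have := hprob P hP
    obtain ⟨hGi, hGB⟩ := hG P hP
    calc ∫ ω, ψ (x + ω 0) ∂P ≤ ∫ ω, (M + c * √(G ω)) ∂P :=
          integral_mono (hψ.integrable (by fun_prop))
            ((integrable_const M).add ((hGi.sqrt hG0).const_mul c)) hle
      _ = M + c * ∫ ω, √(G ω) ∂P := by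
          rw [integral_add (integrable_const M) ((hGi.sqrt hG0).const_mul c), integral_const,
            probReal_univ, one_smul, integral_const_mul]
      _ ≤ M + c * √B := by
          gcongr
          exact (integral_sqrt_le_sqrt_integral hGi hG0).trans (Real.sqrt_le_sqrt hGB)

lemma le_stepOp_of_sqrt_le (hprob : ∀ P ∈ Pset, IsProbabilityMeasure P)
    {ψ : ℝ → ℝ} (hψ : BLip ψ) {G : (ℕ → ℝ) → ℝ} {L c B x : ℝ} (hc : 0 ≤ c)
    (hG0 : ∀ ω, 0 ≤ G ω) (hle : ∀ ω, L - c * √(G ω) ≤ ψ (x + ω 0))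
    (hG : ∃ P ∈ Pset, Integrable G P ∧ ∫ ω, G ω ∂P ≤ B) : L - c * √B ≤ stepOp Pset ψ x := by
  obtain ⟨P, hP, hGi, hGB⟩ := hG
  have := hprob P hP
  calc L - c * √B ≤ L - c * ∫ ω, √(G ω) ∂P := by
        gcongr
        exact (integral_sqrt_le_sqrt_integral hGi hG0).trans (Real.sqrt_le_sqrt hGB)
    _ = ∫ ω, (L - c * √(G ω)) ∂P := by
        rw [integral_sub (integrable_const L) ((hGi.sqrt hG0).const_mul c), integral_const,
          probReal_univ, one_smul, integral_const_mul]
    _ ≤ ∫ ω, ψ (x + ω 0) ∂P :=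
        integral_mono ((integrable_const L).sub ((hGi.sqrt hG0).const_mul c))
          (hψ.integrable (by fun_prop)) hle
    _ ≤ stepOp Pset ψ x := hψ.integral_comp_le_SE hprob _ hP

lemma infDist_Icc_zero_zero (z : ℝ) : infDist z (Icc 0 0) = |z| := by
  rw [Icc_self, infDist_singleton, Real.dist_eq, sub_zero]

section Iterates

variable {μl μb w : ℝ}

lemma iterate_stepOp_le (hne : Pset.Nonempty) (hprob : ∀ P ∈ Pset, IsProbabilityMeasure P)
    (hX : ∀ P ∈ Pset, MemLp (fun ω => ω 0) 2 P) (hμ : μl ≤ μb) (hw : 0 ≤ w)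
    (hup : ∀ P ∈ Pset, ∀ x a b : ℝ, a ≤ b →
      ∫ ω, infDist (x + ω 0) (Icc (a + μl) (b + μb)) ^ 2 ∂P ≤ infDist x (Icc a b) ^ 2 + w)
    {M c : ℝ} (hc : 0 ≤ c) (k : ℕ) {ψ : ℝ → ℝ} {v : ℝ} (hψ : BLip ψ) (hv : 0 ≤ v)
    (hle : ∀ y, ψ y ≤ M + c * √(infDist y (Icc (k * μl) (k * μb)) ^ 2 + v)) :
    (stepOp Pset)^[k] ψ 0 ≤ M + c * √(v + k * w) := by
  induction k generalizing ψ v with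
  | zero => simpa [infDist_Icc_zero_zero] using hle 0
  | succ k ih =>
    simp only [Nat.cast_succ, add_one_mul] at hle
    rw [Function.iterate_succ_apply]
    have hstep : ∀ y, stepOp Pset ψ y ≤
        M + c * √(infDist y (Icc (k * μl) (k * μb)) ^ 2 + (v + w)) := fun y => by
      refine stepOp_le_of_le_sqrt hne hprob hψ hc
        (G := fun ω => infDist (y + ω 0) (Icc (k * μl + μl) (k * μb + μb)) ^ 2 + v)
        (fun ω => by positivity) (fun ω => ?_) fun P hP => ?_
      · exact hle (y + ω 0)
      have := hprob P hP
      have hint := ((memLp_const y).add (hX P hP)).integrable_infDist_sq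
        (Y := fun ω : ℕ → ℝ => y + ω 0) (Icc (k * μl + μl) (k * μb + μb))
      refine ⟨hint.add (integrable_const v), ?_⟩
      rw [integral_add hint (integrable_const v), integral_const, probReal_univ, one_smul]
      linarith [hup P hP y (k * μl) (k * μb) (by gcongr)]
    refine (ih (bLip_stepOp hne hprob hψ) (by positivity) hstep).trans_eq ?_
    rw [Nat.cast_succ]
    ring_nf

lemma le_iterate_stepOp (hne : Pset.Nonempty) (hprob : ∀ P ∈ Pset, IsProbabilityMeasure P)
    (hX : ∀ P ∈ Pset, MemLp (fun ω => ω 0) 2 P) (hμ : μl ≤ μb) (hw : 0 ≤ w)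
    (hlow : ∀ a b z : ℝ, a ≤ b → ∃ P ∈ Pset,
      ∫ ω, infDist (z - ω 0) (Icc a b) ^ 2 ∂P ≤ infDist z (Icc (a + μl) (b + μb)) ^ 2 + w)
    {ψ : ℝ → ℝ} (hψ : BLip ψ) {c : ℝ} (hc : 0 ≤ c) (hψc : ∀ x z, ψ (x + z) - c * |z| ≤ ψ x)
    (k : ℕ) (x z : ℝ) :
    ψ (x + z) - c * √(infDist z (Icc (k * μl) (k * μb)) ^ 2 + k * w) ≤ (stepOp Pset)^[k] ψ x := by
  induction k generalizing x z with
  | zero => simpa [infDist_Icc_zero_zero, Real.sqrt_sq_eq_abs] using hψc x z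
  | succ k ih =>
    rw [Function.iterate_succ_apply', Nat.cast_succ, add_one_mul, add_one_mul]
    obtain ⟨P, hP, hPz⟩ := hlow (k * μl) (k * μb) z (by gcongr)
    have := hprob P hP
    have hint := ((memLp_const z).sub (hX P hP)).integrable_infDist_sq
      (Y := fun ω : ℕ → ℝ => z - ω 0) (Icc (k * μl) (k * μb))
    refine le_stepOp_of_sqrt_le hprob (bLip_iterate_stepOp hne hprob hψ k) hc
      (G := fun ω => infDist (z - ω 0) (Icc (k * μl) (k * μb)) ^ 2 + k * w)
      (fun ω => by positivity) (fun ω => ?_) ⟨P, hP, hint.add (integrable_const _), ?_⟩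
    · simpa using ih (x + ω 0) (z - ω 0)
    · rw [integral_add hint (integrable_const _), integral_const, probReal_univ, one_smul]
      linarith

end Iterates

/-! ## Bounded test functions -/

lemma le_add_sqrt_div_of_forall_add {a b s N : ℝ} (h : ∀ δ > 0, a ≤ b + √(s + δ) / N) :
    a ≤ b + √s / N := by
  have hlim : Tendsto (fun δ => b + √(s + δ) / N) (𝓝[>] 0) (𝓝 (b + √(s + 0) / N)) :=
    ((continuous_const.add ((continuous_const.add continuous_id).sqrt.div_const N)).tendsto
      0).mono_left nhdsWithin_le_nhds
  rw [add_zero] at hlim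
  exact ge_of_tendsto hlim (eventually_nhdsWithin_of_forall h)

lemma inv_mul_sqrt_mul {N u : ℝ} (hN : 0 < N) : N⁻¹ * √(N * u) = √u / √N := by
  rw [Real.sqrt_mul hN.le, ← Real.mul_self_sqrt hN.le, mul_inv,
    Real.sqrt_mul_self (Real.sqrt_nonneg N)]
  field_simp [(Real.sqrt_pos.2 hN).ne']

section Bounded

variable {μl μb s2 : ℝ} {φ : ℝ → ℝ} {n : ℕ}

lemma abs_comp_div_sub_le (hφ : LipschitzWith 1 φ) (N s t : ℝ) :
    |φ (s / N) - φ (t / N)| ≤ |N⁻¹| * |s - t| := by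
  simpa [Real.dist_eq, div_eq_mul_inv, ← sub_mul, abs_mul, mul_comm] using
    hφ.dist_le_mul (s / N) (t / N)

lemma bLip_comp_div (hφ : LipschitzWith 1 φ) (hφb : BLip φ) (N : ℝ) : BLip fun s => φ (s / N) :=
  ⟨⟨_, LipschitzWith.of_dist_le' fun s t => by
    simpa only [Real.dist_eq] using abs_comp_div_sub_le hφ N s t⟩,
    hφb.2.imp fun _ hM s => hM _⟩

lemma SE_le_sSup_add (hne : Pset.Nonempty) (hprob : ∀ P ∈ Pset, IsProbabilityMeasure P)
    (hindep : IndepCoords Pset) (hid : IdentDistCoords Pset)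
    (hX : ∀ P ∈ Pset, MemLp (fun ω => ω 0) 2 P) (hμ : μl ≤ μb) (hs2 : 0 ≤ s2)
    (hup : ∀ P ∈ Pset, ∀ x a b : ℝ, a ≤ b →
      ∫ ω, infDist (x + ω 0) (Icc (a + μl) (b + μb)) ^ 2 ∂P ≤ infDist x (Icc a b) ^ 2 + s2)
    (hφ : LipschitzWith 1 φ) (hφb : BLip φ) (hn : 1 ≤ n) :
    SE Pset (fun ω => φ ((∑ i ∈ Finset.range n, ω i) / n)) ≤
      sSup (φ '' Icc μl μb) + √s2 / √n := by
  have hN : (0 : ℝ) < n := by exact_mod_cast hn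
  have hbase : ∀ y, φ (y / n) ≤
      sSup (φ '' Icc μl μb) + (n : ℝ)⁻¹ * √(infDist y (Icc (n * μl) (n * μb)) ^ 2 + 0) := by
    intro y
    obtain ⟨q, hq, hyq⟩ := (isCompact_Icc (a := n * μl) (b := n * μb)).exists_infDist_eq_dist
      (nonempty_Icc.2 (by gcongr)) y
    have hqI : q / n ∈ Icc μl μb :=
      ⟨(le_div_iff₀ hN).2 (by linarith [hq.1]), (div_le_iff₀ hN).2 (by linarith [hq.2])⟩
    have h1 := le_csSup (isCompact_Icc.bddAbove_image hφ.continuous.continuousOn)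
      (mem_image_of_mem φ hqI)
    have h2 := (abs_le.1 (abs_comp_div_sub_le hφ n y q)).2
    rw [add_zero, Real.sqrt_sq infDist_nonneg, hyq, Real.dist_eq]
    rw [abs_of_pos (inv_pos.2 hN)] at h2
    linarith
  rw [SE_sum_range_eq_iterate hne hprob hindep hid n (bLip_comp_div hφ hφb n)]
  have h := iterate_stepOp_le hne hprob hX hμ hs2 hup (inv_nonneg.2 hN.le) n
    (bLip_comp_div hφ hφb n) le_rfl hbase
  rwa [zero_add, inv_mul_sqrt_mul hN] at h

lemma sSup_le_SE_add (hne : Pset.Nonempty) (hprob : ∀ P ∈ Pset, IsProbabilityMeasure P)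
    (hindep : IndepCoords Pset) (hid : IdentDistCoords Pset)
    (hX : ∀ P ∈ Pset, MemLp (fun ω => ω 0) 2 P) (hμ : μl ≤ μb) (hs2 : 0 ≤ s2)
    (hlow : ∀ δ > 0, ∀ a b z : ℝ, a ≤ b → ∃ P ∈ Pset,
      ∫ ω, infDist (z - ω 0) (Icc a b) ^ 2 ∂P ≤ infDist z (Icc (a + μl) (b + μb)) ^ 2 + (s2 + δ))
    (hφ : LipschitzWith 1 φ) (hφb : BLip φ) (hn : 1 ≤ n) :
    sSup (φ '' Icc μl μb) ≤
      SE Pset (fun ω => φ ((∑ i ∈ Finset.range n, ω i) / n)) + √s2 / √n := by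
  have hN : (0 : ℝ) < n := by exact_mod_cast hn
  refine csSup_le ((nonempty_Icc.2 hμ).image φ) ?_
  rintro _ ⟨r, hr, rfl⟩
  refine le_add_sqrt_div_of_forall_add fun δ hδ => ?_
  have h := le_iterate_stepOp hne hprob hX hμ (by positivity) (hlow δ hδ)
    (bLip_comp_div hφ hφb n) (inv_nonneg.2 hN.le)
    (fun x z => by
      have := (abs_le.1 (abs_comp_div_sub_le hφ n (x + z) x)).2
      rw [abs_of_pos (inv_pos.2 hN), add_sub_cancel_left] at this
      linarith) n 0 (n * r)
  have hnr : n * r ∈ Icc (n * μl) (n * μb) :=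
    ⟨mul_le_mul_of_nonneg_left hr.1 hN.le, mul_le_mul_of_nonneg_left hr.2 hN.le⟩
  rw [infDist_zero_of_mem hnr, zero_add,
    mul_div_cancel_left₀ r hN.ne', ← SE_sum_range_eq_iterate hne hprob hindep hid n
    (bLip_comp_div hφ hφb n)] at h
  rw [← inv_mul_sqrt_mul hN]
  simpa using h

end Bounded

/-! ## Means and the upper variance -/

noncomputable def upperVariance (Pset : Set (Measure (ℕ → ℝ))) (μl μb : ℝ) : ℝ :=
  sInf ((fun μ : ℝ => SE Pset (fun ω => |ω 0 - μ| ^ 2)) '' Icc μl μb)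

section Moments

variable {C μl μb : ℝ}

lemma integral_coord_mem_Icc (hprob : ∀ P ∈ Pset, IsProbabilityMeasure P)
    (hX : ∀ P ∈ Pset, MemLp (fun ω => ω 0) 2 P) (hC : ∀ P ∈ Pset, ∫ ω, ω 0 ^ 2 ∂P ≤ C)
    (hμb : ⨆ P : Pset, ∫ ω, ω 0 ∂(P : Measure (ℕ → ℝ)) = μb)
    (hμl : ⨅ P : Pset, ∫ ω, ω 0 ∂(P : Measure (ℕ → ℝ)) = μl) {P : Measure (ℕ → ℝ)}
    (hP : P ∈ Pset) : ∫ ω, ω 0 ∂P ∈ Icc μl μb := by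
  have hbd : ∀ Q : Pset, |∫ ω, ω 0 ∂(Q : Measure (ℕ → ℝ))| ≤ √C := fun Q => by
    have := hprob Q Q.2
    exact (abs_integral_le_sqrt_integral_sq (hX Q Q.2)).trans (Real.sqrt_le_sqrt (hC Q Q.2))
  constructor
  · rw [← hμl]
    exact ciInf_le ⟨-√C, by rintro _ ⟨Q, rfl⟩; exact (abs_le.1 (hbd Q)).1⟩ (⟨P, hP⟩ : Pset)
  · rw [← hμb]
    exact le_ciSup ⟨√C, by rintro _ ⟨Q, rfl⟩; exact (abs_le.1 (hbd Q)).2⟩ (⟨P, hP⟩ : Pset)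

lemma exists_lt_integral_coord (hne : Pset.Nonempty)
    (hμb : ⨆ P : Pset, ∫ ω, ω 0 ∂(P : Measure (ℕ → ℝ)) = μb) {ε : ℝ} (hε : 0 < ε) :
    ∃ P ∈ Pset, μb - ε < ∫ ω, ω 0 ∂P := by
  have := hne.to_subtype
  obtain ⟨P, hP⟩ := exists_lt_of_lt_ciSup (hμb.symm ▸ sub_lt_self μb hε :
    μb - ε < ⨆ P : Pset, ∫ ω, ω 0 ∂(P : Measure (ℕ → ℝ)))
  exact ⟨P, P.2, hP⟩

lemma exists_integral_coord_lt (hne : Pset.Nonempty)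
    (hμl : ⨅ P : Pset, ∫ ω, ω 0 ∂(P : Measure (ℕ → ℝ)) = μl) {ε : ℝ} (hε : 0 < ε) :
    ∃ P ∈ Pset, ∫ ω, ω 0 ∂P < μl + ε := by
  have := hne.to_subtype
  obtain ⟨P, hP⟩ := exists_lt_of_ciInf_lt (hμl.symm ▸ lt_add_of_pos_right μl hε :
    ⨅ P : Pset, ∫ ω, ω 0 ∂(P : Measure (ℕ → ℝ)) < μl + ε)
  exact ⟨P, P.2, hP⟩

lemma sq_sub_add_variance_le_SE (hprob : ∀ P ∈ Pset, IsProbabilityMeasure P)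
    (hX : ∀ P ∈ Pset, MemLp (fun ω => ω 0) 2 P) (hC : ∀ P ∈ Pset, ∫ ω, ω 0 ^ 2 ∂P ≤ C)
    (μ : ℝ) {P : Measure (ℕ → ℝ)} (hP : P ∈ Pset) :
    (∫ ω, ω 0 ∂P - μ) ^ 2 + Var[fun ω => ω 0; P] ≤ SE Pset fun ω => |ω 0 - μ| ^ 2 := by
  have := hprob P hP
  simp_rw [sq_abs]
  rw [← integral_sub_sq_eq (hX P hP) μ]
  refine integral_le_SE (c := 2 * C + 2 * μ ^ 2) hP fun Q hQ => ?_
  have := hprob Q hQ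
  have h0 := integral_sub_sq_eq (hX Q hQ) 0
  simp only [sub_zero] at h0
  rw [integral_sub_sq_eq (hX Q hQ) μ]
  nlinarith [hC Q hQ, variance_nonneg (fun ω : ℕ → ℝ => ω 0) Q, sq_nonneg (∫ ω, ω 0 ∂Q + μ)]

lemma variance_le_upperVariance (hprob : ∀ P ∈ Pset, IsProbabilityMeasure P)
    (hX : ∀ P ∈ Pset, MemLp (fun ω => ω 0) 2 P) (hC : ∀ P ∈ Pset, ∫ ω, ω 0 ^ 2 ∂P ≤ C)
    (hμ : μl ≤ μb) {P : Measure (ℕ → ℝ)} (hP : P ∈ Pset) :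
    Var[fun ω => ω 0; P] ≤ upperVariance Pset μl μb := by
  refine le_csInf ((nonempty_Icc.2 hμ).image _) ?_
  rintro _ ⟨μ, -, rfl⟩
  linarith [sq_nonneg (∫ ω, ω 0 ∂P - μ), sq_sub_add_variance_le_SE hprob hX hC μ hP]

lemma exists_forall_sq_sub_add_variance_le (hprob : ∀ P ∈ Pset, IsProbabilityMeasure P)
    (hX : ∀ P ∈ Pset, MemLp (fun ω => ω 0) 2 P) (hC : ∀ P ∈ Pset, ∫ ω, ω 0 ^ 2 ∂P ≤ C)
    (hμ : μl ≤ μb) {δ : ℝ} (hδ : 0 < δ) : ∃ μ ∈ Icc μl μb, ∀ P ∈ Pset,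
      (∫ ω, ω 0 ∂P - μ) ^ 2 + Var[fun ω => ω 0; P] ≤ upperVariance Pset μl μb + δ := by
  obtain ⟨_, ⟨μ, hμI, rfl⟩, hlt⟩ :=
    exists_lt_of_csInf_lt ((nonempty_Icc.2 hμ).image _) (lt_add_of_pos_right _ hδ)
  exact ⟨μ, hμI, fun P hP => (sq_sub_add_variance_le_SE hprob hX hC μ hP).trans hlt.le⟩

lemma integral_infDist_add_sq_le_upperVariance (hprob : ∀ P ∈ Pset, IsProbabilityMeasure P)
    (hX : ∀ P ∈ Pset, MemLp (fun ω => ω 0) 2 P) (hC : ∀ P ∈ Pset, ∫ ω, ω 0 ^ 2 ∂P ≤ C)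
    (hμb : ⨆ P : Pset, ∫ ω, ω 0 ∂(P : Measure (ℕ → ℝ)) = μb)
    (hμl : ⨅ P : Pset, ∫ ω, ω 0 ∂(P : Measure (ℕ → ℝ)) = μl) (hμ : μl ≤ μb)
    {P : Measure (ℕ → ℝ)} (hP : P ∈ Pset) (x a b : ℝ) (hab : a ≤ b) :
    ∫ ω, infDist (x + ω 0) (Icc (a + μl) (b + μb)) ^ 2 ∂P ≤
      infDist x (Icc a b) ^ 2 + upperVariance Pset μl μb := by
  have := hprob P hP
  refine (integral_infDist_const_add_sq_le (hX P hP)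
    (integral_coord_mem_Icc hprob hX hC hμb hμl hP) hab x).trans ?_
  gcongr
  exact variance_le_upperVariance hprob hX hC hμ hP

lemma exists_integral_infDist_sub_sq_le_upperVariance (hne : Pset.Nonempty)
    (hprob : ∀ P ∈ Pset, IsProbabilityMeasure P)
    (hX : ∀ P ∈ Pset, MemLp (fun ω => ω 0) 2 P) (hC : ∀ P ∈ Pset, ∫ ω, ω 0 ^ 2 ∂P ≤ C)
    (hμb : ⨆ P : Pset, ∫ ω, ω 0 ∂(P : Measure (ℕ → ℝ)) = μb)
    (hμl : ⨅ P : Pset, ∫ ω, ω 0 ∂(P : Measure (ℕ → ℝ)) = μl) (hμ : μl ≤ μb)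
    {δ : ℝ} (hδ : 0 < δ) (a b z : ℝ) (hab : a ≤ b) :
    ∃ P ∈ Pset, ∫ ω, infDist (z - ω 0) (Icc a b) ^ 2 ∂P ≤
      infDist z (Icc (a + μl) (b + μb)) ^ 2 + (upperVariance Pset μl μb + δ) := by
  obtain ⟨μ, hμI, hμP⟩ := exists_forall_sq_sub_add_variance_le hprob hX hC hμ hδ
  exact exists_integral_infDist_sub_sq_le hne hprob hX
    (fun P hP => variance_le_upperVariance hprob hX hC hμ hP)
    (fun ε hε => exists_lt_integral_coord hne hμb hε)
    (fun ε hε => exists_integral_coord_lt hne hμl hε) hμI hμP hδ hab z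

end Moments

/-! ## Truncation -/

section Truncation

variable {Ω : Type*} [MeasurableSpace Ω] {P : Measure Ω}

lemma bLip_min_abs_sq {k : ℝ} (hk : 0 ≤ k) : BLip fun t : ℝ => min |t| k ^ 2 := by
  have hmin : LipschitzWith 1 fun t : ℝ => min |t| k := by
    simpa only [Real.norm_eq_abs] using (lipschitzWith_one_norm (E := ℝ)).min_const k
  have hbd : ∀ t : ℝ, 0 ≤ min |t| k ∧ min |t| k ≤ k :=
    fun t => ⟨le_min (abs_nonneg t) hk, min_le_right _ _⟩
  refine ⟨⟨_, LipschitzWith.of_dist_le' (K := 2 * k) fun s t => ?_⟩, k ^ 2, fun t => ?_⟩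
  · have hst := hmin.dist_le_mul s t
    simp only [NNReal.coe_one, one_mul, Real.dist_eq] at hst ⊢
    rw [sq_sub_sq, abs_mul]
    exact mul_le_mul (abs_le.2 ⟨by linarith [hbd s, hbd t], by linarith [hbd s, hbd t]⟩) hst
      (abs_nonneg _) (by linarith)
  · rw [abs_of_nonneg (sq_nonneg _)]
    exact pow_le_pow_left₀ (hbd t).1 (hbd t).2 2

lemma memLp_two_and_integral_sq_le_of_min_abs {Y : Ω → ℝ} [IsFiniteMeasure P] (hY : Measurable Y)
    {C : ℝ} (h : ∀ k : ℕ, ∫ ω, min |Y ω| k ^ 2 ∂P ≤ C) :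
    MemLp Y 2 P ∧ ∫ ω, Y ω ^ 2 ∂P ≤ C := by
  have hmeas : ∀ k : ℕ, Measurable fun ω => ENNReal.ofReal (min |Y ω| k ^ 2) := fun k =>
    ((hY.abs.min measurable_const).pow_const 2).ennreal_ofReal
  have hmono : Monotone fun (k : ℕ) ω => ENNReal.ofReal (min |Y ω| k ^ 2) :=
    fun k l hkl ω => ENNReal.ofReal_le_ofReal <| pow_le_pow_left₀ (le_min (abs_nonneg _)
      k.cast_nonneg) (min_le_min_left _ (Nat.cast_le.2 hkl)) 2
  have hsup : ∀ ω, ⨆ k : ℕ, ENNReal.ofReal (min |Y ω| k ^ 2) = ENNReal.ofReal (Y ω ^ 2) :=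
    fun ω => le_antisymm
      (iSup_le fun k => ENNReal.ofReal_le_ofReal <| (sq_abs (Y ω)) ▸
        pow_le_pow_left₀ (le_min (abs_nonneg _) k.cast_nonneg) (min_le_left _ _) 2)
      (le_iSup_of_le ⌈|Y ω|⌉₊ <| by rw [min_eq_left (Nat.le_ceil _), sq_abs])
  have hlin : ∫⁻ ω, ENNReal.ofReal (Y ω ^ 2) ∂P ≤ ENNReal.ofReal C := by
    simp_rw [← hsup]
    rw [lintegral_iSup hmeas hmono]
    refine iSup_le fun k => ?_
    rw [← ofReal_integral_eq_lintegral_ofReal ((bLip_min_abs_sq k.cast_nonneg).integrable hY)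
      (ae_of_all _ fun ω => sq_nonneg _)]
    exact ENNReal.ofReal_le_ofReal (h k)
  have hint : Integrable (fun ω => Y ω ^ 2) P :=
    ⟨(hY.pow_const 2).aestronglyMeasurable, (hasFiniteIntegral_iff_ofReal
      (ae_of_all _ fun ω => sq_nonneg _)).2 (hlin.trans_lt ENNReal.ofReal_lt_top)⟩
  refine ⟨(memLp_two_iff_integrable_sq hY.aestronglyMeasurable).2 hint, ?_⟩
  rw [integral_eq_lintegral_of_nonneg_ae (ae_of_all _ fun ω => sq_nonneg _) hint.1]
  exact ENNReal.toReal_le_of_le_ofReal ((integral_nonneg fun ω => sq_nonneg _).trans (h 0)) hlin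

lemma memLp_avg_and_integral_sq_le [IsProbabilityMeasure P] {X : ℕ → Ω → ℝ} {C : ℝ}
    (hX : ∀ i, MemLp (X i) 2 P ∧ ∫ ω, X i ω ^ 2 ∂P ≤ C) {n : ℕ} (hn : 1 ≤ n) :
    MemLp (fun ω => (∑ i ∈ Finset.range n, X i ω) / n) 2 P ∧
      ∫ ω, ((∑ i ∈ Finset.range n, X i ω) / n) ^ 2 ∂P ≤ C := by
  have hS : MemLp (fun ω => (∑ i ∈ Finset.range n, X i ω) / n) 2 P := by
    simpa only [div_eq_inv_mul, Finset.sum_apply] using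
      (memLp_finsetSum' (Finset.range n) fun i _ => (hX i).1).const_mul (n : ℝ)⁻¹
  have hsq : Integrable (fun ω => ∑ i ∈ Finset.range n, X i ω ^ 2) P :=
    integrable_finsetSum _ fun i _ => (hX i).1.integrable_sq
  refine ⟨hS, ?_⟩
  have hN : (0 : ℝ) < n := by exact_mod_cast hn
  calc ∫ ω, ((∑ i ∈ Finset.range n, X i ω) / n) ^ 2 ∂P
      ≤ ∫ ω, (∑ i ∈ Finset.range n, X i ω ^ 2) / n ∂P :=
        integral_mono hS.integrable_sq (hsq.div_const _) fun ω => by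
          simpa using sum_div_card_sq_le_sum_sq_div_card (s := Finset.range n)
            (f := fun i => X i ω)
    _ = (∑ i ∈ Finset.range n, ∫ ω, X i ω ^ 2 ∂P) / n := by
        rw [integral_div, integral_finsetSum _ fun i _ => (hX i).1.integrable_sq]
    _ ≤ (n * C) / n := by
        gcongr
        simpa using Finset.sum_le_card_nsmul (Finset.range n) _ C fun i _ => (hX i).2
    _ = C := by field_simp

noncomputable def clip (R t : ℝ) : ℝ := max (-R) (min R t)

lemma abs_clip_le {R : ℝ} (hR : 0 ≤ R) (t : ℝ) : |clip R t| ≤ R :=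
  abs_le.2 ⟨le_max_left _ _, max_le (by linarith) (min_le_left _ _)⟩

lemma clip_of_abs_le {R t : ℝ} (h : |t| ≤ R) : clip R t = t := by
  rw [clip, min_eq_right (abs_le.1 h).2, max_eq_right (abs_le.1 h).1]

lemma LipschitzWith.clip {φ : ℝ → ℝ} {K : NNReal} (hφ : LipschitzWith K φ) (R : ℝ) :
    LipschitzWith K fun y => clip R (φ y) :=
  (hφ.const_min R).const_max (-R)

lemma abs_sub_clip_le {φ : ℝ → ℝ} (hφ : LipschitzWith 1 φ) {R : ℝ} (hR : 0 < R)
    (hR0 : 2 * |φ 0| ≤ R) (y : ℝ) : |φ y - clip R (φ y)| ≤ 2 * y ^ 2 / R := by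
  have hφy : |φ y| ≤ |φ 0| + |y| := by
    have := hφ.dist_le_mul y 0
    simp only [Real.dist_eq, NNReal.coe_one, one_mul, sub_zero] at this
    linarith [abs_sub_abs_le_abs_sub (φ y) (φ 0)]
  have hexcess : |φ y| - R ≤ 2 * y ^ 2 / R := by
    rw [le_div_iff₀ hR]
    nlinarith [abs_nonneg y, sq_abs y, sq_nonneg (|y| - R / 4)]
  have hpos : 0 ≤ 2 * y ^ 2 / R := by positivity
  unfold clip
  rcases le_total (φ y) R with h1 | h1
  · rcases le_total (-R) (φ y) with h2 | h2
    · rw [min_eq_right h1, max_eq_right h2, sub_self, abs_zero]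
      exact hpos
    · rw [min_eq_right h1, max_eq_left h2, abs_of_nonpos (by linarith)]
      linarith [neg_abs_le (φ y)]
  · rw [min_eq_left h1, max_eq_right (by linarith), abs_of_nonneg (by linarith)]
    linarith [le_abs_self (φ y)]

lemma abs_integral_sub_integral_clip_le [IsProbabilityMeasure P] {Y : Ω → ℝ} (hY : MemLp Y 2 P)
    {φ : ℝ → ℝ} (hφ : LipschitzWith 1 φ) {R : ℝ} (hR : 0 < R) (hR0 : 2 * |φ 0| ≤ R) :
    |∫ ω, φ (Y ω) ∂P - ∫ ω, clip R (φ (Y ω)) ∂P| ≤ 2 * (∫ ω, Y ω ^ 2 ∂P) / R := by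
  have hφY : Integrable (fun ω => φ (Y ω)) P := by
    refine ((integrable_const |φ 0|).add (hY.integrable one_le_two).abs).mono'
      (hφ.continuous.comp_aestronglyMeasurable hY.1) (ae_of_all _ fun ω => ?_)
    have := hφ.dist_le_mul (Y ω) 0
    simp only [Real.dist_eq, NNReal.coe_one, one_mul, sub_zero, Real.norm_eq_abs,
      Pi.add_apply] at this ⊢
    linarith [abs_sub_abs_le_abs_sub (φ (Y ω)) (φ 0)]
  have hclip : Integrable (fun ω => clip R (φ (Y ω))) P :=
    .of_bound ((hφ.clip R).continuous.comp_aestronglyMeasurable hY.1) R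
      (ae_of_all _ fun ω => (Real.norm_eq_abs _).trans_le (abs_clip_le hR.le _))
  rw [← integral_sub hφY hclip, ← integral_const_mul, ← integral_div]
  exact abs_integral_le_integral_abs.trans (integral_mono (hφY.sub hclip).abs
    ((hY.integrable_sq.const_mul 2).div_const R) fun ω => abs_sub_clip_le hφ hR hR0 (Y ω))

end Truncation

lemma memLp_coord_and_integral_sq_le (hne : Pset.Nonempty)
    (hprob : ∀ P ∈ Pset, IsProbabilityMeasure P) (hid : IdentDistCoords Pset)
    (hX : ∀ P ∈ Pset, MemLp (fun ω => ω 0) 2 P) {C : ℝ} (hC : ∀ P ∈ Pset, ∫ ω, ω 0 ^ 2 ∂P ≤ C)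
    (i : ℕ) {P : Measure (ℕ → ℝ)} (hP : P ∈ Pset) :
    MemLp (fun ω => ω i) 2 P ∧ ∫ ω, ω i ^ 2 ∂P ≤ C := by
  have := hprob P hP
  refine memLp_two_and_integral_sq_le_of_min_abs (measurable_pi_apply i) fun k => ?_
  have hτ := bLip_min_abs_sq (k.cast_nonneg : (0 : ℝ) ≤ k)
  calc ∫ ω, min |ω i| k ^ 2 ∂P ≤ SE Pset fun ω => min |ω i| k ^ 2 :=
        hτ.integral_comp_le_SE hprob (fun ω => ω i) hP
    _ = SE Pset fun ω => min |ω 0| k ^ 2 := hid i _ hτ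
    _ ≤ C := SE_le hne fun Q hQ => by
        have := hprob Q hQ
        refine (integral_mono (hτ.integrable (measurable_pi_apply 0)) (hX Q hQ).integrable_sq
          fun ω => ?_).trans (hC Q hQ)
        simpa only [sq_abs] using
          pow_le_pow_left₀ (le_min (abs_nonneg _) k.cast_nonneg) (min_le_left |ω 0| _) 2

lemma abs_SE_sub_SE_clip_le (hne : Pset.Nonempty) (hprob : ∀ P ∈ Pset, IsProbabilityMeasure P)
    (hid : IdentDistCoords Pset) (hX : ∀ P ∈ Pset, MemLp (fun ω => ω 0) 2 P)
    {C : ℝ} (hC : ∀ P ∈ Pset, ∫ ω, ω 0 ^ 2 ∂P ≤ C) {φ : ℝ → ℝ} (hφ : LipschitzWith 1 φ)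
    {R : ℝ} (hR : 0 < R) (hR0 : 2 * |φ 0| ≤ R) {n : ℕ} (hn : 1 ≤ n) :
    |SE Pset (fun ω => φ ((∑ i ∈ Finset.range n, ω i) / n)) -
      SE Pset (fun ω => clip R (φ ((∑ i ∈ Finset.range n, ω i) / n)))| ≤ 2 * C / R := by
  refine abs_SE_sub_SE_le hne (c := R) (fun P hP => ?_) fun P hP => ?_
  · have := hprob P hP
    exact (le_abs_self _).trans (by
      simpa using norm_integral_le_of_norm_le_const (μ := P)
        (ae_of_all _ fun ω => (Real.norm_eq_abs _).trans_le (abs_clip_le hR.le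
          (φ ((∑ i ∈ Finset.range n, ω i) / n)))))
  · have := hprob P hP
    obtain ⟨hS, hS2⟩ := memLp_avg_and_integral_sq_le (X := fun i (ω : ℕ → ℝ) => ω i)
      (fun i => memLp_coord_and_integral_sq_le hne hprob hid hX hC i hP) hn
    exact (abs_integral_sub_integral_clip_le hS hφ hR hR0).trans (by gcongr)

theorem abs_SE_sub_sSup_le_add {C μl μb : ℝ} (hne : Pset.Nonempty)
    (hprob : ∀ P ∈ Pset, IsProbabilityMeasure P)
    (hindep : IndepCoords Pset) (hid : IdentDistCoords Pset)
    (hX : ∀ P ∈ Pset, MemLp (fun ω => ω 0) 2 P) (hC : ∀ P ∈ Pset, ∫ ω, ω 0 ^ 2 ∂P ≤ C)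
    (hμb : ⨆ P : Pset, ∫ ω, ω 0 ∂(P : Measure (ℕ → ℝ)) = μb)
    (hμl : ⨅ P : Pset, ∫ ω, ω 0 ∂(P : Measure (ℕ → ℝ)) = μl)
    {φ : ℝ → ℝ} (hφ : LipschitzWith 1 φ) {n : ℕ} (hn : 1 ≤ n)
    {R : ℝ} (hR : 0 < R) (hR0 : 2 * |φ 0| ≤ R) (hRI : ∀ r ∈ Icc μl μb, |φ r| ≤ R) :
    |SE Pset (fun ω => φ ((∑ i ∈ Finset.range n, ω i) / n)) - sSup (φ '' Icc μl μb)| ≤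
      √(upperVariance Pset μl μb) / √n + 2 * C / R := by
  obtain ⟨P₀, hP₀⟩ := hne
  have hmean := integral_coord_mem_Icc hprob hX hC hμb hμl hP₀
  have hμ : μl ≤ μb := hmean.1.trans hmean.2
  have := hprob P₀ hP₀
  have hs2 := (variance_nonneg _ _).trans (variance_le_upperVariance hprob hX hC hμ hP₀)
  have hφR : BLip fun y => clip R (φ y) := ⟨⟨1, hφ.clip R⟩, R, fun y => abs_clip_le hR.le (φ y)⟩
  have himage : (fun y => clip R (φ y)) '' Icc μl μb = φ '' Icc μl μb :=
    image_congr fun r hr => clip_of_abs_le (hRI r hr)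
  have hupper := SE_le_sSup_add ⟨P₀, hP₀⟩ hprob hindep hid hX hμ hs2
    (fun P hP => integral_infDist_add_sq_le_upperVariance hprob hX hC hμb hμl hμ hP)
    (hφ.clip R) hφR hn
  have hlower := sSup_le_SE_add ⟨P₀, hP₀⟩ hprob hindep hid hX hμ hs2
    (fun δ hδ =>
      exists_integral_infDist_sub_sq_le_upperVariance ⟨P₀, hP₀⟩ hprob hX hC hμb hμl hμ hδ)
    (hφ.clip R) hφR hn
  have htrunc := abs_SE_sub_SE_clip_le ⟨P₀, hP₀⟩ hprob hid hX hC hφ hR hR0 hn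
  rw [himage] at hupper hlower
  rw [abs_le] at htrunc ⊢
  constructor <;> linarith [htrunc.1, htrunc.2]

/-- Convergence rate in Peng's law of large numbers with the upper standard
deviation as the constant (Corollary 3.1). -/
theorem peng_lln_rate_upper_variance
    (Pset : Set (Measure (ℕ → ℝ))) (hne : Pset.Nonempty)
    (hprob : ∀ P ∈ Pset, IsProbabilityMeasure P)
    (hindep : IndepCoords Pset) (hid : IdentDistCoords Pset)
    (hint : ∀ P ∈ Pset, Integrable (fun ω : ℕ → ℝ => |ω 0| ^ 2) P)
    (hmom : BddAbove ((fun P : Measure (ℕ → ℝ) => ∫ ω, |ω 0| ^ 2 ∂P) '' Pset))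
    (μbar μlow : ℝ)
    (hμbar : (⨆ P : Pset, ∫ ω, ω 0 ∂(P : Measure (ℕ → ℝ))) = μbar)
    (hμlow : (⨅ P : Pset, ∫ ω, ω 0 ∂(P : Measure (ℕ → ℝ))) = μlow)
    (n : ℕ) (hn : 1 ≤ n)
    (φ : ℝ → ℝ) (hφ : LipschitzWith 1 φ) :
    |SE Pset (fun ω => φ ((∑ i ∈ Finset.range n, ω i) / n)) -
        sSup (φ '' Set.Icc μlow μbar)| ≤
      Real.sqrt (sInf ((fun μ : ℝ => SE Pset (fun ω => |ω 0 - μ| ^ 2)) ''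
          Set.Icc μlow μbar)) / Real.sqrt n := by
  obtain ⟨C, hCub⟩ := hmom
  have hC : ∀ P ∈ Pset, ∫ ω, ω 0 ^ 2 ∂P ≤ C := fun P hP => by
    simpa only [sq_abs] using hCub ⟨P, hP, rfl⟩
  have hX : ∀ P ∈ Pset, MemLp (fun ω => ω 0) 2 P := fun P hP =>
    (memLp_two_iff_integrable_sq (measurable_pi_apply 0).aestronglyMeasurable).2
      (by simpa only [sq_abs] using hint P hP)
  obtain ⟨B, hB⟩ := (isCompact_Icc (a := μlow) (b := μbar)).exists_bound_of_continuousOn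
    hφ.continuous.continuousOn
  have hlim : Tendsto (fun R => √(upperVariance Pset μlow μbar) / √n + 2 * C / R) atTop
      (𝓝 (√(upperVariance Pset μlow μbar) / √n + 0)) :=
    tendsto_const_nhds.add (tendsto_const_nhds.div_atTop tendsto_id)
  rw [add_zero] at hlim
  refine ge_of_tendsto hlim ?_
  filter_upwards [eventually_ge_atTop (1 + 2 * |φ 0| + |B|)] with R hR
  exact abs_SE_sub_sSup_le_add hne hprob hindep hid hX hC hμbar hμlow hφ hn
    (by linarith [abs_nonneg (φ 0), abs_nonneg B]) (by linarith [abs_nonneg B])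
    fun r hr => by
      linarith [(Real.norm_eq_abs (φ r)).symm.trans_le (hB r hr), le_abs_self B, abs_nonneg (φ 0)]
end

section
/- (Chatterji's inequality.) Let (Ω, F, P) be a probability space with a filtration F_0 ⊆ F_1 ⊆ ⋯ ⊆ F_n, and let d_1,…,d_n be a martingale-difference sequence: each d_j is F_j-measurable, integrable, and E[d_j | F_{j−1}] = 0 almost surely. Let p ∈ [1,2] and assume E[|d_j|^p] < ∞ for all j ≤ n. Then E[|d_1 + ⋯ + d_n|^p] ≤ 2^{2−p} · Σ_{j=1}^n E[|d_j|^p]. -/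
/-!
Write `signPow p x = sign x * |x| ^ (p - 1)`, so that `p * signPow p` is the derivative of
`|x| ^ p`. For `1 < p ≤ 2` the map `signPow p` is `(p - 1)`-Hölder with constant `2 ^ (2 - p)`,
and integrating it from `a` to `a + b` gives the pointwise bound
`|a + b| ^ p ≤ |a| ^ p + p * signPow p a * b + 2 ^ (2 - p) * |b| ^ p`
(for `p = 1` this is the triangle inequality). Take `a = d₁ + ⋯ + d_{k-1}` and `b = d_k`:
the cross term has expectation zero since `a` is `ℱ (k - 1)`-measurable and
`E[d_k | ℱ (k - 1)] = 0`, so `E|a + b| ^ p ≤ E|a| ^ p + 2 ^ (2 - p) E|b| ^ p`,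
and induction on `k` concludes.
-/

open Real MeasureTheory

namespace Real

lemma add_rpow_le_two_rpow_mul_rpow_add {a b q : ℝ} (ha : 0 ≤ a) (hb : 0 ≤ b) (hq0 : 0 ≤ q)
    (hq1 : q ≤ 1) : a ^ q + b ^ q ≤ 2 ^ (1 - q) * (a + b) ^ q := by
  have h := (concaveOn_rpow hq0 hq1).2 (Set.mem_Ici.2 ha) (Set.mem_Ici.2 hb)
    (by norm_num : (0 : ℝ) ≤ 1 / 2) (by norm_num : (0 : ℝ) ≤ 1 / 2) (by norm_num)
  have h2 : (0 : ℝ) < 2 ^ q := by positivity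
  simp only [smul_eq_mul, ← mul_add] at h
  rw [mul_rpow (by norm_num) (by positivity), one_div, inv_rpow zero_le_two] at h
  rw [inv_mul_eq_div, inv_mul_eq_div, div_le_div_iff₀ two_pos h2] at h
  rw [rpow_sub zero_lt_two, rpow_one, div_mul_eq_mul_div, le_div_iff₀ h2]
  linarith

lemma rpow_sub_one_mul_le_rpow_add_rpow {a b p : ℝ} (ha : 0 ≤ a) (hb : 0 ≤ b) (hp : 1 ≤ p) :
    a ^ (p - 1) * b ≤ a ^ p + b ^ p := by
  have hpow : ∀ c : ℝ, 0 ≤ c → c ^ (p - 1) * c = c ^ p := fun c hc => by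
    rw [← rpow_add_one' hc (by linarith), sub_add_cancel]
  rcases le_total a b with hab | hba
  · calc a ^ (p - 1) * b ≤ b ^ (p - 1) * b :=
          mul_le_mul_of_nonneg_right (rpow_le_rpow ha hab (by linarith)) hb
      _ ≤ a ^ p + b ^ p := by rw [hpow b hb]; linarith [rpow_nonneg ha p]
  · calc a ^ (p - 1) * b ≤ a ^ (p - 1) * a :=
          mul_le_mul_of_nonneg_left hba (rpow_nonneg ha _)
      _ ≤ a ^ p + b ^ p := by rw [hpow a ha]; linarith [rpow_nonneg hb p]

end Real

noncomputable def signPow (p x : ℝ) : ℝ := x * |x| ^ (p - 2)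

lemma signPow_neg (p x : ℝ) : signPow p (-x) = -signPow p x := by simp [signPow]

lemma signPow_of_nonneg {p x : ℝ} (hp : p ≠ 1) (hx : 0 ≤ x) : signPow p x = x ^ (p - 1) := by
  rw [signPow, abs_of_nonneg hx, mul_comm, ← rpow_add_one' hx (by contrapose! hp; linarith),
    show p - 2 + 1 = p - 1 by ring]

lemma abs_signPow_le (p x : ℝ) : |signPow p x| ≤ |x| ^ (p - 1) := by
  rcases eq_or_ne x 0 with rfl | hx
  · simp only [signPow, zero_mul, abs_zero]
    positivity
  · rw [signPow, abs_mul, abs_of_nonneg (rpow_nonneg (abs_nonneg x) _), mul_comm,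
      ← rpow_add_one (abs_ne_zero.2 hx), show p - 2 + 1 = p - 1 by ring]

lemma hasDerivAt_abs_rpow_signPow {p : ℝ} (hp : 1 < p) (x : ℝ) :
    HasDerivAt (fun t => |t| ^ p) (p * signPow p x) x := by
  convert hasDerivAt_abs_rpow x hp using 1
  rw [signPow]
  ring

lemma continuous_signPow {p : ℝ} (hp : 1 < p) : Continuous (signPow p) := by
  refine continuous_iff_continuousAt.2 fun x => ?_
  rcases eq_or_ne x 0 with rfl | hx
  · have hcont : Continuous fun t : ℝ => |t| ^ (p - 1) :=
      (continuous_rpow_const (sub_nonneg.2 hp.le)).comp continuous_abs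
    have hlim := hcont.tendsto' 0 0 (by simp [zero_rpow (sub_ne_zero.2 hp.ne')])
    simpa [ContinuousAt, signPow] using squeeze_zero_norm (abs_signPow_le p) hlim
  · exact continuousAt_id.mul
      ((continuousAt_rpow_const _ _ (Or.inl (abs_ne_zero.2 hx))).comp continuous_abs.continuousAt)

lemma measurable_signPow (p : ℝ) : Measurable (signPow p) :=
  measurable_id.mul (measurable_id.abs.pow_const _)

lemma signPow_sub_le_of_nonneg {p x y : ℝ} (hp1 : 1 < p) (hp2 : p ≤ 2) (hy : 0 ≤ y)
    (hyx : y ≤ x) : signPow p x - signPow p y ≤ (x - y) ^ (p - 1) := by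
  rw [signPow_of_nonneg hp1.ne' (hy.trans hyx), signPow_of_nonneg hp1.ne' hy, sub_le_iff_le_add]
  simpa using rpow_add_le_add_rpow (sub_nonneg.2 hyx) hy (by linarith) (by linarith)

lemma signPow_sub_le {p x y : ℝ} (hp1 : 1 < p) (hp2 : p ≤ 2) (hyx : y ≤ x) :
    signPow p x - signPow p y ≤ 2 ^ (2 - p) * (x - y) ^ (p - 1) := by
  have hxy : 0 ≤ (x - y) ^ (p - 1) := rpow_nonneg (sub_nonneg.2 hyx) _
  have htwo : (1 : ℝ) ≤ 2 ^ (2 - p) := one_le_rpow one_le_two (by linarith)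
  rcases le_total 0 y with hy | hy
  · nlinarith [signPow_sub_le_of_nonneg hp1 hp2 hy hyx]
  rcases le_total x 0 with hx | hx
  · have h := signPow_sub_le_of_nonneg hp1 hp2 (neg_nonneg.2 hx) (neg_le_neg hyx)
    rw [signPow_neg, signPow_neg] at h
    simp only [neg_sub_neg] at h
    nlinarith
  have h := add_rpow_le_two_rpow_mul_rpow_add hx (neg_nonneg.2 hy) (by linarith) (by linarith)
    (q := p - 1)
  have hy' : signPow p y = -(-y) ^ (p - 1) := by
    rw [← signPow_of_nonneg hp1.ne' (neg_nonneg.2 hy), signPow_neg, neg_neg]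
  rwa [signPow_of_nonneg hp1.ne' hx, hy', sub_neg_eq_add, sub_eq_add_neg x y,
    show (2 : ℝ) - p = 1 - (p - 1) by ring]

lemma abs_add_rpow_le_of_nonneg {p b : ℝ} (hp1 : 1 < p) (hp2 : p ≤ 2) (a : ℝ) (hb : 0 ≤ b) :
    |a + b| ^ p ≤ |a| ^ p + p * signPow p a * b + 2 ^ (2 - p) * b ^ p := by
  have hderiv : Continuous fun x => p * signPow p x := continuous_const.mul (continuous_signPow hp1)
  have hpow : Continuous fun x => (x - a) ^ (p - 1) :=
    (continuous_rpow_const (sub_nonneg.2 hp1.le)).comp (continuous_sub_right a)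
  have hbound : Continuous fun x => p * (signPow p a + 2 ^ (2 - p) * (x - a) ^ (p - 1)) := by
    fun_prop
  have hftc : ∫ x in a..a + b, p * signPow p x = |a + b| ^ p - |a| ^ p :=
    intervalIntegral.integral_eq_sub_of_hasDerivAt (fun x _ => hasDerivAt_abs_rpow_signPow hp1 x)
      (hderiv.intervalIntegrable _ _)
  have hmono : ∫ x in a..a + b, p * signPow p x
      ≤ ∫ x in a..a + b, p * (signPow p a + 2 ^ (2 - p) * (x - a) ^ (p - 1)) :=
    intervalIntegral.integral_mono_on (by linarith) (hderiv.intervalIntegrable _ _)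
      (hbound.intervalIntegrable _ _) fun x hx => mul_le_mul_of_nonneg_left
        (by linarith [signPow_sub_le hp1 hp2 hx.1]) (by linarith)
  have hcalc : ∫ x in a..a + b, p * (signPow p a + 2 ^ (2 - p) * (x - a) ^ (p - 1))
      = p * signPow p a * b + 2 ^ (2 - p) * b ^ p := by
    rw [intervalIntegral.integral_const_mul, intervalIntegral.integral_add intervalIntegrable_const
      ((hpow.const_mul _).intervalIntegrable _ _), intervalIntegral.integral_const,
      intervalIntegral.integral_const_mul,
      intervalIntegral.integral_comp_sub_right (fun x => x ^ (p - 1)),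
      integral_rpow (Or.inl (by linarith))]
    simp only [add_sub_cancel_left, sub_self, sub_add_cancel, smul_eq_mul,
      zero_rpow (by linarith : p ≠ 0), sub_zero]
    field_simp
  linarith

lemma abs_add_rpow_le {p : ℝ} (hp1 : 1 ≤ p) (hp2 : p ≤ 2) (a b : ℝ) :
    |a + b| ^ p ≤ |a| ^ p + p * signPow p a * b + 2 ^ (2 - p) * |b| ^ p := by
  rcases hp1.eq_or_lt with rfl | hp1
  · have h : |signPow 1 a * b| ≤ |b| := by
      rw [abs_mul]
      exact mul_le_of_le_one_left (abs_nonneg b) (by simpa using abs_signPow_le 1 a)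
    rw [show (2 : ℝ) - 1 = 1 by norm_num]
    simp only [rpow_one, one_mul]
    linarith [abs_add_le a b, neg_abs_le (signPow 1 a * b)]
  rcases le_total 0 b with hb | hb
  · rw [abs_of_nonneg hb]
    exact abs_add_rpow_le_of_nonneg hp1 hp2 a hb
  · have h := abs_add_rpow_le_of_nonneg hp1 hp2 (-a) (neg_nonneg.2 hb)
    rw [← neg_add, abs_neg, abs_neg, signPow_neg] at h
    rw [abs_of_nonpos hb]
    linarith

section Integration

variable {Ω : Type*} {m m0 : MeasurableSpace Ω} {μ : Measure Ω}

lemma integrable_abs_rpow_iff_memLp {f : Ω → ℝ} {p : ℝ} (hf : AEStronglyMeasurable f μ)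
    (hp : 0 < p) : Integrable (fun ω => |f ω| ^ p) μ ↔ MemLp f (ENNReal.ofReal p) μ := by
  simpa [ENNReal.toReal_ofReal hp.le] using
    integrable_norm_rpow_iff hf (ENNReal.ofReal_pos.2 hp).ne' ENNReal.ofReal_ne_top

lemma integrable_signPow_mul {f g : Ω → ℝ} {p : ℝ} (hp : 1 ≤ p) (hf : AEStronglyMeasurable f μ)
    (hg : AEStronglyMeasurable g μ) (hfp : Integrable (fun ω => |f ω| ^ p) μ)
    (hgp : Integrable (fun ω => |g ω| ^ p) μ) :
    Integrable (fun ω => signPow p (f ω) * g ω) μ := by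
  refine (hfp.add hgp).mono' (((measurable_signPow p).comp_aemeasurable hf.aemeasurable
    ).aestronglyMeasurable.mul hg) (ae_of_all _ fun ω => ?_)
  rw [Real.norm_eq_abs, abs_mul]
  exact (mul_le_mul_of_nonneg_right (abs_signPow_le p _) (abs_nonneg _)).trans
    (rpow_sub_one_mul_le_rpow_add_rpow (abs_nonneg _) (abs_nonneg _) hp)

lemma integral_mul_eq_zero_of_condExp_eq_zero (hm : m ≤ m0) [SigmaFinite (μ.trim hm)]
    {f g : Ω → ℝ} (hf : StronglyMeasurable[m] f) (hfg : Integrable (f * g) μ)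
    (hg : Integrable g μ) (hg0 : μ[g|m] =ᵐ[μ] 0) : ∫ ω, f ω * g ω ∂μ = 0 := by
  calc ∫ ω, f ω * g ω ∂μ = ∫ ω, (μ[f * g|m]) ω ∂μ := (integral_condExp hm).symm
    _ = ∫ ω, (f * μ[g|m]) ω ∂μ :=
        integral_congr_ae (condExp_mul_of_stronglyMeasurable_left hf hfg hg)
    _ = 0 := by
      have hzero : f * μ[g|m] =ᵐ[μ] 0 := hg0.mono fun ω hω => by simp [hω]
      rw [integral_congr_ae hzero, Pi.zero_def, integral_zero]

lemma integral_abs_add_rpow_le [IsFiniteMeasure μ] (hm : m ≤ m0) {p : ℝ} (hp1 : 1 ≤ p)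
    (hp2 : p ≤ 2) {X D : Ω → ℝ} (hX : StronglyMeasurable[m] X) (hD : Integrable D μ)
    (hD0 : μ[D|m] =ᵐ[μ] 0) (hXp : Integrable (fun ω => |X ω| ^ p) μ)
    (hDp : Integrable (fun ω => |D ω| ^ p) μ) :
    ∫ ω, |X ω + D ω| ^ p ∂μ ≤ ∫ ω, |X ω| ^ p ∂μ + 2 ^ (2 - p) * ∫ ω, |D ω| ^ p ∂μ := by
  have hX' : AEStronglyMeasurable X μ := (hX.mono hm).aestronglyMeasurable
  have hp0 : 0 < p := by linarith
  have hcross := integrable_signPow_mul hp1 hX' hD.1 hXp hDp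
  have hsum : Integrable (fun ω => |X ω + D ω| ^ p) μ :=
    (integrable_abs_rpow_iff_memLp (hX'.add hD.1) hp0).2
      (((integrable_abs_rpow_iff_memLp hX' hp0).1 hXp).add
        ((integrable_abs_rpow_iff_memLp hD.1 hp0).1 hDp))
  have hcross0 : ∫ ω, signPow p (X ω) * D ω ∂μ = 0 :=
    integral_mul_eq_zero_of_condExp_eq_zero hm
      ((measurable_signPow p).comp hX.measurable).stronglyMeasurable hcross hD hD0
  calc ∫ ω, |X ω + D ω| ^ p ∂μ
      ≤ ∫ ω, (|X ω| ^ p + p * (signPow p (X ω) * D ω) + 2 ^ (2 - p) * |D ω| ^ p) ∂μ :=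
        integral_mono hsum ((hXp.add (hcross.const_mul p)).add (hDp.const_mul _)) fun ω => by
          rw [← mul_assoc]; exact abs_add_rpow_le hp1 hp2 _ _
    _ = ∫ ω, |X ω| ^ p ∂μ + p * ∫ ω, signPow p (X ω) * D ω ∂μ
          + 2 ^ (2 - p) * ∫ ω, |D ω| ^ p ∂μ := by
        rw [integral_add (f := fun ω => |X ω| ^ p + p * (signPow p (X ω) * D ω))
            (hXp.add (hcross.const_mul p)) (hDp.const_mul _),
          integral_add hXp (hcross.const_mul p), integral_const_mul, integral_const_mul]
    _ = ∫ ω, |X ω| ^ p ∂μ + 2 ^ (2 - p) * ∫ ω, |D ω| ^ p ∂μ := by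
        rw [hcross0, mul_zero, add_zero]

end Integration

/-- Chatterji's inequality: for a martingale-difference sequence `d_1, …, d_n`
and `p ∈ [1,2]`, `E[|d_1 + ⋯ + d_n|^p] ≤ 2^{2-p} ∑_{j=1}^n E[|d_j|^p]`. -/
theorem chatterji_inequality
    {Ω : Type*} [MeasurableSpace Ω] (P : Measure Ω) [IsProbabilityMeasure P]
    (n : ℕ) (ℱ : ℕ → MeasurableSpace Ω)
    (hℱ_mono : Monotone ℱ) (hℱ_le : ∀ j, ℱ j ≤ ‹MeasurableSpace Ω›)
    (d : ℕ → Ω → ℝ)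
    (hmeas : ∀ j ∈ Finset.Icc 1 n, Measurable[ℱ j] (d j))
    (hint : ∀ j ∈ Finset.Icc 1 n, Integrable (d j) P)
    (hmd : ∀ j ∈ Finset.Icc 1 n, P[d j | ℱ (j - 1)] =ᵐ[P] 0)
    (p : ℝ) (hp : p ∈ Set.Icc (1 : ℝ) 2)
    (hLp : ∀ j ∈ Finset.Icc 1 n, Integrable (fun ω => |d j ω| ^ p) P) :
    ∫ ω, |∑ j ∈ Finset.Icc 1 n, d j ω| ^ p ∂P ≤
      2 ^ (2 - p) * ∑ j ∈ Finset.Icc 1 n, ∫ ω, |d j ω| ^ p ∂P := by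
  obtain ⟨hp1, hp2⟩ := hp
  have hp0 : 0 < p := by linarith
  have hsum_meas : ∀ k ≤ n, Measurable[ℱ k] fun ω => ∑ j ∈ Finset.Icc 1 k, d j ω :=
    fun k hk => Finset.measurable_sum _ fun j hj =>
      (hmeas j (Finset.Icc_subset_Icc_right hk hj)).mono (hℱ_mono (Finset.mem_Icc.1 hj).2) le_rfl
  have hsum_Lp : ∀ k ≤ n, Integrable (fun ω => |∑ j ∈ Finset.Icc 1 k, d j ω| ^ p) P := by
    refine fun k hk => (integrable_abs_rpow_iff_memLp
      ((hsum_meas k hk).mono (hℱ_le k) le_rfl).aestronglyMeasurable hp0).2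
      (memLp_finsetSum _ fun j hj => ?_)
    have hjn := Finset.Icc_subset_Icc_right hk hj
    exact (integrable_abs_rpow_iff_memLp (hint j hjn).1 hp0).1 (hLp j hjn)
  suffices ∀ k ≤ n, ∫ ω, |∑ j ∈ Finset.Icc 1 k, d j ω| ^ p ∂P ≤
      2 ^ (2 - p) * ∑ j ∈ Finset.Icc 1 k, ∫ ω, |d j ω| ^ p ∂P from this n le_rfl
  intro k hk
  induction k with
  | zero => simp [zero_rpow hp0.ne']
  | succ k ih =>
    have hk' : k + 1 ∈ Finset.Icc 1 n := Finset.mem_Icc.2 ⟨by omega, hk⟩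
    have hstep := integral_abs_add_rpow_le (hℱ_le k) hp1 hp2
      (hsum_meas k (by omega)).stronglyMeasurable (hint _ hk') (by simpa using hmd _ hk')
      (hsum_Lp k (by omega)) (hLp _ hk')
    simp only [Finset.sum_Icc_succ_top (by omega : 1 ≤ k + 1), mul_add]
    linarith [ih (by omega)]
end

section
/- Let (Ω, F, P) be a probability space with a filtration F_0 ⊆ F_1 ⊆ ⋯ ⊆ F_n, and let X_1,…,X_n be random variables with X_i F_i-measurable. Let α ∈ (0,1] and C_α > 0 be such that E[|X_i|^{1+α}] ≤ C_α for all i ≤ n. Set S_n := X_1 + ⋯ + X_n and S_n^P := Σ_{i=1}^n E[X_i | F_{i−1}]. Then E[|S_n − S_n^P|^{1+α}] ≤ 4 n C_α. -/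
/-!
Put `p = 1 + α ∈ (1, 2]` and `d i = X i - E[X i | ℱ (i - 1)]`, so that `S_n - S_n^P = ∑ d i` is a
sum of martingale differences. Conditional Jensen gives `E|E[X i | ℱ (i - 1)]|^p ≤ E|X i|^p`, hence
`E|d i|^p ≤ 2^(p-1) (E|X i|^p + E|E[X i | ℱ (i - 1)]|^p) ≤ 2^p C_α`.

The derivative `p · signedRpow (p-1) x = p sign(x) |x|^(p-1)` of `|x|^p` is `(p-1)`-Hölder with
constant `p 2^(2-p)`; integrating it along a segment gives
`|x + y|^p ≤ |x|^p + p sign(x) |x|^(p-1) y + 2^(2-p) |y|^p`. For `x` the partial sum `M k` and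
`y = d (k+1)` the middle term has expectation zero, since `M k` is `ℱ k`-measurable and
`E[d (k+1) | ℱ k] = 0`. By induction `E|M n|^p ≤ 2^(2-p) ∑ E|d i|^p`, which is at most
`2^(2-p) n 2^p C_α = 4 n C_α`.
-/

open MeasureTheory

lemma Real.rpow_add_rpow_le_two_rpow_mul {q a b : ℝ} (hq₀ : 0 ≤ q) (hq₁ : q ≤ 1) (ha : 0 ≤ a)
    (hb : 0 ≤ b) : a ^ q + b ^ q ≤ 2 ^ (1 - q) * (a + b) ^ q := by
  have h := (Real.concaveOn_rpow hq₀ hq₁).2 (Set.mem_Ici.mpr ha) (Set.mem_Ici.mpr hb)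
    (by norm_num : (0 : ℝ) ≤ 1 / 2) (by norm_num : (0 : ℝ) ≤ 1 / 2) (by norm_num)
  simp only [smul_eq_mul, ← mul_add] at h
  rw [Real.mul_rpow (by norm_num) (by positivity), Real.div_rpow zero_le_one zero_le_two,
    Real.one_rpow] at h
  rw [Real.rpow_sub two_pos, Real.rpow_one]
  field_simp at h ⊢
  linarith

lemma Real.rpow_add_le_two_rpow_mul {p a b : ℝ} (hp : 1 ≤ p) (ha : 0 ≤ a) (hb : 0 ≤ b) :
    (a + b) ^ p ≤ 2 ^ (p - 1) * (a ^ p + b ^ p) := by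
  have h := (convexOn_rpow hp).2 (Set.mem_Ici.mpr ha) (Set.mem_Ici.mpr hb)
    (by norm_num : (0 : ℝ) ≤ 1 / 2) (by norm_num : (0 : ℝ) ≤ 1 / 2) (by norm_num)
  simp only [smul_eq_mul, ← mul_add] at h
  rw [Real.mul_rpow (by norm_num) (by positivity), Real.div_rpow zero_le_one zero_le_two,
    Real.one_rpow] at h
  rw [Real.rpow_sub_one two_ne_zero]
  field_simp at h ⊢
  linarith

lemma Real.rpow_sub_one_mul_le_rpow_add_rpow_s8 {p a b : ℝ} (hp : 1 ≤ p) (ha : 0 ≤ a) (hb : 0 ≤ b) :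
    a ^ (p - 1) * b ≤ a ^ p + b ^ p := by
  have hself {x : ℝ} (hx : 0 ≤ x) : x ^ (p - 1) * x = x ^ p := by
    rw [← Real.rpow_add_one' hx (by linarith), sub_add_cancel]
  have hq : 0 ≤ p - 1 := by linarith
  rcases le_total a b with h | h
  · calc a ^ (p - 1) * b ≤ b ^ (p - 1) * b := by gcongr
      _ ≤ a ^ p + b ^ p := by rw [hself hb]; linarith [Real.rpow_nonneg ha p]
  · calc a ^ (p - 1) * b ≤ a ^ (p - 1) * a := by gcongr
      _ ≤ a ^ p + b ^ p := by rw [hself ha]; linarith [Real.rpow_nonneg hb p]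

lemma abs_add_rpow_le_two_rpow_mul {p : ℝ} (hp : 1 ≤ p) (a b : ℝ) :
    |a + b| ^ p ≤ 2 ^ (p - 1) * (|a| ^ p + |b| ^ p) :=
  (Real.rpow_le_rpow (abs_nonneg _) (abs_add_le a b) (by linarith)).trans
    (Real.rpow_add_le_two_rpow_mul hp (abs_nonneg a) (abs_nonneg b))

lemma abs_sub_rpow_le_two_rpow_mul {p : ℝ} (hp : 1 ≤ p) (a b : ℝ) :
    |a - b| ^ p ≤ 2 ^ (p - 1) * (|a| ^ p + |b| ^ p) := by
  simpa [sub_eq_add_neg] using abs_add_rpow_le_two_rpow_mul hp a (-b)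

noncomputable def signedRpow (q x : ℝ) : ℝ := if 0 ≤ x then x ^ q else -(-x) ^ q

section SignedRpow

variable {q x : ℝ}

lemma signedRpow_of_nonneg (hx : 0 ≤ x) : signedRpow q x = x ^ q := if_pos hx

lemma signedRpow_of_nonpos (hq : q ≠ 0) (hx : x ≤ 0) : signedRpow q x = -(-x) ^ q := by
  rcases hx.eq_or_lt with rfl | hx
  · simp [signedRpow, Real.zero_rpow hq]
  · exact if_neg hx.not_ge

lemma abs_signedRpow (hq : q ≠ 0) (x : ℝ) : |signedRpow q x| = |x| ^ q := by
  rcases le_total 0 x with hx | hx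
  · rw [signedRpow_of_nonneg hx, abs_of_nonneg hx, abs_of_nonneg (by positivity)]
  · rw [signedRpow_of_nonpos hq hx, abs_neg, abs_of_nonpos hx,
      abs_of_nonneg (Real.rpow_nonneg (neg_nonneg.mpr hx) q)]

lemma signedRpow_eq_abs_rpow_sub_one_mul (hq : q ≠ 0) (x : ℝ) :
    signedRpow q x = |x| ^ (q - 1) * x := by
  rcases lt_trichotomy x 0 with hx | rfl | hx
  · rw [signedRpow_of_nonpos hq hx.le, abs_of_neg hx, Real.rpow_sub_one (neg_ne_zero.mpr hx.ne),
      div_mul_eq_mul_div, div_neg, mul_div_cancel_right₀ _ hx.ne]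
  · simp [signedRpow, Real.zero_rpow hq]
  · rw [signedRpow_of_nonneg hx.le, abs_of_pos hx, Real.rpow_sub_one hx.ne']
    field_simp

lemma continuous_signedRpow (hq : 0 < q) : Continuous (signedRpow q) :=
  (Real.continuous_rpow_const hq.le).if_le ((Real.continuous_rpow_const hq.le).comp
    continuous_neg).neg continuous_const continuous_id fun x hx => by
      simp [← hx, Real.zero_rpow hq.ne']

lemma monotone_signedRpow (hq : 0 < q) : Monotone (signedRpow q) := by
  intro a b hab
  rcases le_total 0 a with ha | ha
  · rw [signedRpow_of_nonneg ha, signedRpow_of_nonneg (ha.trans hab)]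
    exact Real.rpow_le_rpow ha hab hq.le
  rcases le_total 0 b with hb | hb
  · rw [signedRpow_of_nonpos hq.ne' ha, signedRpow_of_nonneg hb]
    have := Real.rpow_nonneg (neg_nonneg.mpr ha) q
    have := Real.rpow_nonneg hb q
    linarith
  · rw [signedRpow_of_nonpos hq.ne' ha, signedRpow_of_nonpos hq.ne' hb, neg_le_neg_iff]
    exact Real.rpow_le_rpow (by linarith) (by linarith) hq.le

lemma signedRpow_sub_signedRpow_le (hq₀ : 0 < q) (hq₁ : q ≤ 1) {a b : ℝ} (hba : b ≤ a) :
    signedRpow q a - signedRpow q b ≤ 2 ^ (1 - q) * (a - b) ^ q := by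
  have hab : 0 ≤ a - b := sub_nonneg.mpr hba
  have h2 : 1 ≤ (2 : ℝ) ^ (1 - q) := Real.one_le_rpow one_le_two (by linarith)
  have hpow : 0 ≤ (a - b) ^ q := Real.rpow_nonneg hab q
  rcases le_total 0 b with hb | hb
  · have := Real.rpow_add_le_add_rpow hab hb hq₀.le hq₁
    rw [sub_add_cancel] at this
    rw [signedRpow_of_nonneg hb, signedRpow_of_nonneg (hb.trans hba)]
    nlinarith
  rcases le_total 0 a with ha | ha
  · have := Real.rpow_add_rpow_le_two_rpow_mul hq₀.le hq₁ ha (neg_nonneg.mpr hb)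
    rw [signedRpow_of_nonneg ha, signedRpow_of_nonpos hq₀.ne' hb, sub_neg_eq_add]
    simpa only [sub_eq_add_neg] using this
  · have := Real.rpow_add_le_add_rpow hab (neg_nonneg.mpr ha) hq₀.le hq₁
    rw [show a - b + -a = -b by ring] at this
    rw [signedRpow_of_nonpos hq₀.ne' ha, signedRpow_of_nonpos hq₀.ne' hb]
    nlinarith

lemma abs_signedRpow_sub_signedRpow_le (hq₀ : 0 < q) (hq₁ : q ≤ 1) (a b : ℝ) :
    |signedRpow q a - signedRpow q b| ≤ 2 ^ (1 - q) * |a - b| ^ q := by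
  rcases le_total b a with h | h
  · rw [abs_of_nonneg (sub_nonneg.mpr (monotone_signedRpow hq₀ h)),
      abs_of_nonneg (sub_nonneg.mpr h)]
    exact signedRpow_sub_signedRpow_le hq₀ hq₁ h
  · rw [abs_sub_comm, abs_of_nonneg (sub_nonneg.mpr (monotone_signedRpow hq₀ h)), abs_sub_comm,
      abs_of_nonneg (sub_nonneg.mpr h)]
    exact signedRpow_sub_signedRpow_le hq₀ hq₁ h

end SignedRpow

lemma hasDerivAt_abs_rpow_signedRpow {p : ℝ} (hp : 1 < p) (x : ℝ) :
    HasDerivAt (fun y : ℝ => |y| ^ p) (p * signedRpow (p - 1) x) x := by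
  have := hasDerivAt_abs_rpow x hp
  rwa [mul_assoc, show p - 2 = p - 1 - 1 by ring,
    ← signedRpow_eq_abs_rpow_sub_one_mul (by linarith)] at this

lemma integral_mul_signedRpow_add_mul_mul {p : ℝ} (hp : 1 < p) (x y : ℝ) :
    ∫ t in (0 : ℝ)..1, p * (signedRpow (p - 1) (x + t * y) * y) = |x + y| ^ p - |x| ^ p := by
  have hderiv (t : ℝ) :
      HasDerivAt (fun t : ℝ => |x + t * y| ^ p) (p * (signedRpow (p - 1) (x + t * y) * y)) t := by
    rw [← mul_assoc]
    exact (hasDerivAt_abs_rpow_signedRpow hp (x + t * y)).comp t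
      ((hasDerivAt_mul_const y).const_add x)
  have hcont : Continuous fun t : ℝ => p * (signedRpow (p - 1) (x + t * y) * y) := by
    have hs := continuous_signedRpow (sub_pos.mpr hp)
    fun_prop
  simpa using intervalIntegral.integral_eq_sub_of_hasDerivAt (fun t _ => hderiv t)
    (hcont.intervalIntegrable 0 1)

lemma signedRpow_add_mul_mul_le {p t : ℝ} (hp₁ : 1 < p) (hp₂ : p ≤ 2) (ht : 0 ≤ t) (x y : ℝ) :
    signedRpow (p - 1) (x + t * y) * y ≤
      signedRpow (p - 1) x * y + 2 ^ (2 - p) * |y| ^ p * t ^ (p - 1) := by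
  have hold := abs_signedRpow_sub_signedRpow_le (q := p - 1) (by linarith) (by linarith)
    (x + t * y) x
  rw [add_sub_cancel_left, abs_mul, abs_of_nonneg ht, Real.mul_rpow ht (abs_nonneg y),
    show 1 - (p - 1) = 2 - p by ring] at hold
  have hy : |y| ^ (p - 1) * |y| = |y| ^ p := by
    rw [← Real.rpow_add_one' (abs_nonneg y) (by linarith), sub_add_cancel]
  calc signedRpow (p - 1) (x + t * y) * y
      = signedRpow (p - 1) x * y + (signedRpow (p - 1) (x + t * y) - signedRpow (p - 1) x) * y := by
        ring
    _ ≤ signedRpow (p - 1) x * y + 2 ^ (2 - p) * (t ^ (p - 1) * |y| ^ (p - 1)) * |y| := by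
        grw [le_abs_self ((_ - _) * y), abs_mul, hold]
    _ = signedRpow (p - 1) x * y + 2 ^ (2 - p) * |y| ^ p * t ^ (p - 1) := by rw [← hy]; ring

lemma abs_add_rpow_le_of_le_two {p : ℝ} (hp₁ : 1 < p) (hp₂ : p ≤ 2) (x y : ℝ) :
    |x + y| ^ p ≤ |x| ^ p + p * signedRpow (p - 1) x * y + 2 ^ (2 - p) * |y| ^ p := by
  have hq : 0 < p - 1 := by linarith
  have hs := continuous_signedRpow hq
  have hpow := Real.continuous_rpow_const hq.le
  have hmono : ∫ t in (0 : ℝ)..1, p * (signedRpow (p - 1) (x + t * y) * y) ≤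
      ∫ t in (0 : ℝ)..1, p * (signedRpow (p - 1) x * y + 2 ^ (2 - p) * |y| ^ p * t ^ (p - 1)) :=
    intervalIntegral.integral_mono_on zero_le_one (Continuous.intervalIntegrable (by fun_prop) 0 1)
      (Continuous.intervalIntegrable (by fun_prop) 0 1) fun t ht =>
        mul_le_mul_of_nonneg_left (signedRpow_add_mul_mul_le hp₁ hp₂ ht.1 x y) (by linarith)
  rw [integral_mul_signedRpow_add_mul_mul hp₁, intervalIntegral.integral_const_mul,
    intervalIntegral.integral_add intervalIntegrable_const
      ((intervalIntegral.intervalIntegrable_rpow' (by linarith)).const_mul _),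
    intervalIntegral.integral_const, intervalIntegral.integral_const_mul,
    integral_rpow (Or.inl (by linarith)), sub_add_cancel, Real.one_rpow,
    Real.zero_rpow (by linarith)] at hmono
  simp only [sub_zero, one_mul, smul_eq_mul] at hmono
  calc |x + y| ^ p = |x| ^ p + (|x + y| ^ p - |x| ^ p) := by ring
    _ ≤ |x| ^ p + p * (signedRpow (p - 1) x * y + 2 ^ (2 - p) * |y| ^ p * (1 / p)) := by gcongr
    _ = |x| ^ p + p * signedRpow (p - 1) x * y + 2 ^ (2 - p) * |y| ^ p := by
      field_simp; ring

section Moments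

variable {Ω : Type*} {m m₀ : MeasurableSpace Ω} {μ : Measure Ω} {p : ℝ} {f g : Ω → ℝ}

lemma integrable_abs_rpow_of_ae_le (hp : 0 ≤ p) (hf : AEStronglyMeasurable f μ)
    (hg : Integrable g μ) (hfg : ∀ᵐ ω ∂μ, |f ω| ^ p ≤ g ω) :
    Integrable (fun ω => |f ω| ^ p) μ :=
  hg.mono' ((Real.continuous_rpow_const hp).comp continuous_abs |>.comp_aestronglyMeasurable hf)
    (by filter_upwards [hfg] with ω h; rwa [Real.norm_eq_abs, abs_of_nonneg (by positivity)])

lemma integrable_abs_add_rpow (hp : 1 ≤ p) (hf : AEStronglyMeasurable f μ)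
    (hg : AEStronglyMeasurable g μ) (hfp : Integrable (fun ω => |f ω| ^ p) μ)
    (hgp : Integrable (fun ω => |g ω| ^ p) μ) :
    Integrable (fun ω => |f ω + g ω| ^ p) μ :=
  integrable_abs_rpow_of_ae_le (by linarith) (hf.add hg) ((hfp.add hgp).const_mul _)
    (ae_of_all _ fun ω => abs_add_rpow_le_two_rpow_mul hp (f ω) (g ω))

lemma integrable_abs_sum_rpow {ι : Type*} (hp : 1 ≤ p) {F : ι → Ω → ℝ} (s : Finset ι)
    (hF : ∀ i ∈ s, AEStronglyMeasurable (F i) μ)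
    (hFp : ∀ i ∈ s, Integrable (fun ω => |F i ω| ^ p) μ) :
    Integrable (fun ω => |∑ i ∈ s, F i ω| ^ p) μ := by
  classical
  induction s using Finset.induction_on with
  | empty => simp [Real.zero_rpow (by linarith : p ≠ 0)]
  | insert i s hi ih =>
    simp only [Finset.sum_insert hi]
    simp only [Finset.mem_insert, forall_eq_or_imp] at hF hFp
    exact integrable_abs_add_rpow hp hF.1 (Finset.aestronglyMeasurable_fun_sum s hF.2) hFp.1
      (ih hF.2 hFp.2)

lemma integrable_abs_condExp_rpow (hp : 1 ≤ p) (hfp : Integrable (fun ω => |f ω| ^ p) μ) :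
    Integrable (fun ω => |μ[f|m] ω| ^ p) μ :=
  integrable_abs_rpow_of_ae_le (by linarith) integrable_condExp.1 integrable_condExp
    (Integrable.norm_condExp_rpow_le (f := f) hp hfp)

lemma integral_abs_condExp_rpow_le (hm : m ≤ m₀) [SigmaFinite (μ.trim hm)] (hp : 1 ≤ p)
    (hfp : Integrable (fun ω => |f ω| ^ p) μ) :
    ∫ ω, |μ[f|m] ω| ^ p ∂μ ≤ ∫ ω, |f ω| ^ p ∂μ :=
  (integral_mono_ae (integrable_abs_condExp_rpow hp hfp) integrable_condExp
    (Integrable.norm_condExp_rpow_le (f := f) hp hfp)).trans_eq (integral_condExp hm)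

lemma integrable_abs_sub_condExp_rpow (hp : 1 ≤ p) (hf : AEStronglyMeasurable f μ)
    (hfp : Integrable (fun ω => |f ω| ^ p) μ) :
    Integrable (fun ω => |f ω - μ[f|m] ω| ^ p) μ := by
  simpa [sub_eq_add_neg] using integrable_abs_add_rpow hp hf integrable_condExp.1.neg hfp
    (by simpa using integrable_abs_condExp_rpow (m := m) hp hfp)

lemma integral_abs_sub_condExp_rpow_le (hm : m ≤ m₀) [SigmaFinite (μ.trim hm)] (hp : 1 ≤ p)
    (hf : AEStronglyMeasurable f μ) (hfp : Integrable (fun ω => |f ω| ^ p) μ) :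
    ∫ ω, |f ω - μ[f|m] ω| ^ p ∂μ ≤ 2 ^ p * ∫ ω, |f ω| ^ p ∂μ := by
  have hcp := integrable_abs_condExp_rpow (m := m) hp hfp
  calc ∫ ω, |f ω - μ[f|m] ω| ^ p ∂μ
      ≤ ∫ ω, 2 ^ (p - 1) * (|f ω| ^ p + |μ[f|m] ω| ^ p) ∂μ :=
        integral_mono (integrable_abs_sub_condExp_rpow hp hf hfp) ((hfp.add hcp).const_mul _)
          fun ω => abs_sub_rpow_le_two_rpow_mul hp _ _
    _ = 2 ^ (p - 1) * (∫ ω, |f ω| ^ p ∂μ + ∫ ω, |μ[f|m] ω| ^ p ∂μ) := by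
        rw [integral_const_mul, integral_add hfp hcp]
    _ ≤ 2 ^ (p - 1) * (∫ ω, |f ω| ^ p ∂μ + ∫ ω, |f ω| ^ p ∂μ) := by
        have := integral_abs_condExp_rpow_le hm hp hfp
        gcongr 2 ^ (p - 1) * (_ + ?_)
    _ = 2 ^ p * ∫ ω, |f ω| ^ p ∂μ := by
        rw [Real.rpow_sub_one two_ne_zero]; ring

lemma condExp_sub_condExp_ae_eq_zero (hm : m ≤ m₀) [SigmaFinite (μ.trim hm)]
    (hf : Integrable f μ) : μ[f - μ[f|m]|m] =ᵐ[μ] 0 := by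
  filter_upwards [condExp_sub hf integrable_condExp m] with ω hω
  rw [hω, Pi.sub_apply, condExp_of_stronglyMeasurable hm stronglyMeasurable_condExp
    integrable_condExp, sub_self, Pi.zero_apply]

lemma integral_mul_eq_zero_of_condExp_ae_eq_zero (hm : m ≤ m₀) [SigmaFinite (μ.trim hm)]
    {d : Ω → ℝ} (hg : AEStronglyMeasurable[m] g μ) (hgd : Integrable (g * d) μ)
    (hd : Integrable d μ) (hd₀ : μ[d|m] =ᵐ[μ] 0) :
    ∫ ω, g ω * d ω ∂μ = 0 := by
  have h : μ[g * d|m] =ᵐ[μ] 0 := by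
    filter_upwards [condExp_mul_of_aestronglyMeasurable_left hg hgd hd, hd₀] with ω h h₀
    simp [h, h₀]
  calc ∫ ω, g ω * d ω ∂μ = ∫ ω, μ[g * d|m] ω ∂μ := (integral_condExp hm).symm
    _ = 0 := by simp [integral_congr_ae h]

lemma integrable_signedRpow_mul (hp : 1 < p) (hf : AEStronglyMeasurable f μ)
    (hg : AEStronglyMeasurable g μ) (hfp : Integrable (fun ω => |f ω| ^ p) μ)
    (hgp : Integrable (fun ω => |g ω| ^ p) μ) :
    Integrable (fun ω => signedRpow (p - 1) (f ω) * g ω) μ :=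
  (hfp.add hgp).mono' ((continuous_signedRpow (by linarith)).comp_aestronglyMeasurable hf |>.mul hg)
    (ae_of_all _ fun ω => by
      rw [norm_mul, Real.norm_eq_abs, Real.norm_eq_abs, abs_signedRpow (by linarith)]
      exact Real.rpow_sub_one_mul_le_rpow_add_rpow_s8 hp.le (abs_nonneg _) (abs_nonneg _))

lemma integral_abs_add_rpow_le_of_condExp_ae_eq_zero (hm : m ≤ m₀) [SigmaFinite (μ.trim hm)]
    (hp₁ : 1 < p) (hp₂ : p ≤ 2) {M d : Ω → ℝ} (hM : StronglyMeasurable[m] M)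
    (hMp : Integrable (fun ω => |M ω| ^ p) μ) (hd : Integrable d μ)
    (hdp : Integrable (fun ω => |d ω| ^ p) μ) (hd₀ : μ[d|m] =ᵐ[μ] 0) :
    ∫ ω, |M ω + d ω| ^ p ∂μ ≤ ∫ ω, |M ω| ^ p ∂μ + 2 ^ (2 - p) * ∫ ω, |d ω| ^ p ∂μ := by
  have hM₀ : AEStronglyMeasurable M μ := (hM.mono hm).aestronglyMeasurable
  have hG : Integrable (fun ω => p * signedRpow (p - 1) (M ω) * d ω) μ := by
    simpa only [mul_assoc] using (integrable_signedRpow_mul hp₁ hM₀ hd.1 hMp hdp).const_mul p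
  have hcross : ∫ ω, p * signedRpow (p - 1) (M ω) * d ω ∂μ = 0 := by
    simpa only [mul_assoc, integral_const_mul, mul_eq_zero] using Or.inr <|
      integral_mul_eq_zero_of_condExp_ae_eq_zero hm
        ((continuous_signedRpow (by linarith)).comp_stronglyMeasurable hM).aestronglyMeasurable
        (integrable_signedRpow_mul hp₁ hM₀ hd.1 hMp hdp) hd hd₀
  calc ∫ ω, |M ω + d ω| ^ p ∂μ
      ≤ ∫ ω, |M ω| ^ p + p * signedRpow (p - 1) (M ω) * d ω + 2 ^ (2 - p) * |d ω| ^ p ∂μ :=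
        integral_mono (integrable_abs_add_rpow hp₁.le hM₀ hd.1 hMp hdp)
          ((hMp.fun_add hG).fun_add (hdp.const_mul _))
          fun ω => abs_add_rpow_le_of_le_two hp₁ hp₂ (M ω) (d ω)
    _ = ∫ ω, |M ω| ^ p ∂μ + 2 ^ (2 - p) * ∫ ω, |d ω| ^ p ∂μ := by
        rw [integral_add (hMp.fun_add hG) (hdp.const_mul _), integral_add hMp hG, hcross,
          add_zero, integral_const_mul]

theorem integral_abs_sum_rpow_le [IsFiniteMeasure μ] {ℱ : ℕ → MeasurableSpace Ω}
    (hℱ_mono : Monotone ℱ) (hℱ_le : ∀ i, ℱ i ≤ m₀) (hp₁ : 1 < p) (hp₂ : p ≤ 2)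
    {d : ℕ → Ω → ℝ} (n : ℕ)
    (hd_meas : ∀ i ∈ Finset.Icc 1 n, StronglyMeasurable[ℱ i] (d i))
    (hd_int : ∀ i ∈ Finset.Icc 1 n, Integrable (d i) μ)
    (hdp : ∀ i ∈ Finset.Icc 1 n, Integrable (fun ω => |d i ω| ^ p) μ)
    (hd₀ : ∀ i ∈ Finset.Icc 1 n, μ[d i|ℱ (i - 1)] =ᵐ[μ] 0) :
    ∫ ω, |∑ i ∈ Finset.Icc 1 n, d i ω| ^ p ∂μ ≤
      2 ^ (2 - p) * ∑ i ∈ Finset.Icc 1 n, ∫ ω, |d i ω| ^ p ∂μ := by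
  induction n with
  | zero => simp [Real.zero_rpow (by linarith : p ≠ 0)]
  | succ n ih =>
    have hsub : Finset.Icc 1 n ⊆ Finset.Icc 1 (n + 1) := Finset.Icc_subset_Icc_right n.le_succ
    have hlast : n + 1 ∈ Finset.Icc 1 (n + 1) := by simp
    have hM : StronglyMeasurable[ℱ n] fun ω => ∑ i ∈ Finset.Icc 1 n, d i ω :=
      Finset.stronglyMeasurable_fun_sum _ fun i hi =>
        (hd_meas i (hsub hi)).mono (hℱ_mono (Finset.mem_Icc.mp hi).2)
    have hMp := integrable_abs_sum_rpow hp₁.le (Finset.Icc 1 n)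
      (fun i hi => (hd_int i (hsub hi)).1) fun i hi => hdp i (hsub hi)
    simp only [Finset.sum_Icc_succ_top (Nat.le_add_left 1 n)]
    calc ∫ ω, |∑ i ∈ Finset.Icc 1 n, d i ω + d (n + 1) ω| ^ p ∂μ
        ≤ ∫ ω, |∑ i ∈ Finset.Icc 1 n, d i ω| ^ p ∂μ + 2 ^ (2 - p) * ∫ ω, |d (n + 1) ω| ^ p ∂μ :=
          integral_abs_add_rpow_le_of_condExp_ae_eq_zero (hℱ_le n) hp₁ hp₂ hM hMp
            (hd_int _ hlast) (hdp _ hlast) (by simpa using hd₀ _ hlast)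
      _ ≤ 2 ^ (2 - p) * ∑ i ∈ Finset.Icc 1 n, ∫ ω, |d i ω| ^ p ∂μ +
          2 ^ (2 - p) * ∫ ω, |d (n + 1) ω| ^ p ∂μ := by
          gcongr
          exact ih (fun i hi => hd_meas i (hsub hi)) (fun i hi => hd_int i (hsub hi))
            (fun i hi => hdp i (hsub hi)) fun i hi => hd₀ i (hsub hi)
      _ = _ := by ring

end Moments

theorem martingale_difference_moment_bound_general
    {Ω : Type*} [MeasurableSpace Ω] (P : Measure Ω) [IsProbabilityMeasure P]
    (n : ℕ) (ℱ : ℕ → MeasurableSpace Ω)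
    (hℱ_mono : Monotone ℱ) (hℱ_le : ∀ i, ℱ i ≤ ‹MeasurableSpace Ω›)
    (X : ℕ → Ω → ℝ)
    (hmeas : ∀ i ∈ Finset.Icc 1 n, Measurable[ℱ i] (X i))
    (hint : ∀ i ∈ Finset.Icc 1 n, Integrable (X i) P)
    (α : ℝ) (hα : α ∈ Set.Ioc (0 : ℝ) 1) (Cα : ℝ)
    (hmom : ∀ i ∈ Finset.Icc 1 n,
      Integrable (fun ω => |X i ω| ^ (1 + α)) P ∧
        ∫ ω, |X i ω| ^ (1 + α) ∂P ≤ Cα) :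
    ∫ ω, |∑ i ∈ Finset.Icc 1 n, X i ω -
        ∑ i ∈ Finset.Icc 1 n, (P[X i | ℱ (i - 1)]) ω| ^ (1 + α) ∂P ≤
      4 * n * Cα := by
  obtain ⟨hα₀, hα₁⟩ := hα
  set d : ℕ → Ω → ℝ := fun i => X i - P[X i | ℱ (i - 1)]
  have hd_moment (i : ℕ) (hi : i ∈ Finset.Icc 1 n) :
      ∫ ω, |d i ω| ^ (1 + α) ∂P ≤ 2 ^ (1 + α) * Cα :=
    (integral_abs_sub_condExp_rpow_le (hℱ_le _) (by linarith) (hint i hi).1 (hmom i hi).1).trans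
      (by gcongr; exact (hmom i hi).2)
  calc ∫ ω, |∑ i ∈ Finset.Icc 1 n, X i ω -
        ∑ i ∈ Finset.Icc 1 n, (P[X i | ℱ (i - 1)]) ω| ^ (1 + α) ∂P
      = ∫ ω, |∑ i ∈ Finset.Icc 1 n, d i ω| ^ (1 + α) ∂P := by
        simp [d, Finset.sum_sub_distrib]
    _ ≤ 2 ^ (2 - (1 + α)) * ∑ i ∈ Finset.Icc 1 n, ∫ ω, |d i ω| ^ (1 + α) ∂P :=
        integral_abs_sum_rpow_le hℱ_mono hℱ_le (by linarith) (by linarith) n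
          (fun i hi => (hmeas i hi).stronglyMeasurable.sub
            (stronglyMeasurable_condExp.mono (hℱ_mono (i.sub_le 1))))
          (fun i hi => (hint i hi).sub integrable_condExp)
          (fun i hi => integrable_abs_sub_condExp_rpow (by linarith) (hint i hi).1 (hmom i hi).1)
          fun i hi => condExp_sub_condExp_ae_eq_zero (hℱ_le _) (hint i hi)
    _ ≤ 2 ^ (2 - (1 + α)) * (n * (2 ^ (1 + α) * Cα)) := by
        gcongr
        simpa using Finset.sum_le_card_nsmul _ _ _ hd_moment
    _ = 4 * n * Cα := by
        rw [mul_left_comm, ← mul_assoc (2 ^ _), ← Real.rpow_add two_pos]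
        norm_num
        ring

/-- Key estimate (3.2): for an adapted sequence with `(1+α)`-moments bounded by
`C_α`, `E[|S_n - S_n^P|^{1+α}] ≤ 4 n C_α`, where
`S_n^P = ∑_{i=1}^n E[X_i | F_{i-1}]`. -/
theorem martingale_difference_moment_bound
    {Ω : Type*} [MeasurableSpace Ω] (P : Measure Ω) [IsProbabilityMeasure P]
    (n : ℕ) (ℱ : ℕ → MeasurableSpace Ω)
    (hℱ_mono : Monotone ℱ) (hℱ_le : ∀ i, ℱ i ≤ ‹MeasurableSpace Ω›)
    (X : ℕ → Ω → ℝ)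
    (hmeas : ∀ i ∈ Finset.Icc 1 n, Measurable[ℱ i] (X i))
    (hint : ∀ i ∈ Finset.Icc 1 n, Integrable (X i) P)
    (α : ℝ) (hα : α ∈ Set.Ioc (0 : ℝ) 1) (Cα : ℝ) (hCα : 0 < Cα)
    (hmom : ∀ i ∈ Finset.Icc 1 n,
      Integrable (fun ω => |X i ω| ^ (1 + α)) P ∧
        ∫ ω, |X i ω| ^ (1 + α) ∂P ≤ Cα) :
    ∫ ω, |∑ i ∈ Finset.Icc 1 n, X i ω -
        ∑ i ∈ Finset.Icc 1 n, (P[X i | ℱ (i - 1)]) ω| ^ (1 + α) ∂P ≤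
      4 * n * Cα :=
  martingale_difference_moment_bound_general P n ℱ hℱ_mono hℱ_le X hmeas hint α hα Cα hmom
end
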